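/- arXiv:2411.08435 — 9 statements merged into one kernel-verified Lean document; each statement's English description precedes it below -/
import Mathlib

section
/- Let S and A be nonempty finite sets and let 𝒫 ⊆ Δ(S)^{S×A} be a compact uncertainty set. If 𝒫 is sa-tractable, then 𝒫 is s-tractable, and moreover u^π = û^π for every stationary policy π ∈ Δ(A)^S, every choice of rewards r ∈ ℝ^{S×A×S} and every discount factor γ ∈ [0,1). -/
open scoped BigOperators

namespace RMDP

variable {S A : Type*} [Fintype S] [Fintype A]

def IsKernel (P : S → A → S → ℝ) : Prop := ∀ s a, P s a ∈ stdSimplex ℝ S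

def IsPolicy (π : S → A → ℝ) : Prop := ∀ s, π s ∈ stdSimplex ℝ A

def NextStateIndep (r : S → A → S → ℝ) : Prop :=
  ∀ (s : S) (a : A) (s' s'' : S), r s a s' = r s a s''

noncomputable def minOver {K : Type*} (K0 : Set K) (f : K → ℝ) : ℝ := sInf (f '' K0)

noncomputable def maxOver {K : Type*} (K0 : Set K) (f : K → ℝ) : ℝ := sSup (f '' K0)

noncomputable def TpiP (π : S → A → ℝ) (r : S → A → S → ℝ) (γ : ℝ)
    (P : S → A → S → ℝ) (v : S → ℝ) : S → ℝ :=
  fun s => ∑ a, π s a * ∑ s', P s a s' * (r s a s' + γ * v s')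

noncomputable def Tpi (US : Set (S → A → S → ℝ)) (π : S → A → ℝ)
    (r : S → A → S → ℝ) (γ : ℝ) (v : S → ℝ) : S → ℝ :=
  fun s => minOver US (fun P => ∑ a, π s a * ∑ s', P s a s' * (r s a s' + γ * v s'))

noncomputable def TpiHat (US : Set (S → A → S → ℝ)) (π : S → A → ℝ)
    (r : S → A → S → ℝ) (γ : ℝ) (v : S → ℝ) : S → ℝ :=
  fun s => ∑ a, π s a * minOver US (fun P => ∑ s', P s a s' * (r s a s' + γ * v s'))

noncomputable def Topt (US : Set (S → A → S → ℝ)) (r : S → A → S → ℝ) (γ : ℝ)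
    (v : S → ℝ) : S → ℝ :=
  fun s => maxOver (stdSimplex ℝ A)
    (fun p => minOver US (fun P => ∑ a, p a * ∑ s', P s a s' * (r s a s' + γ * v s')))

def IsHPolicy (π : List (S × A) → S → A → ℝ) : Prop := ∀ h s, π h s ∈ stdSimplex ℝ A

noncomputable def expRHH (π : List (S × A) → S → A → ℝ)
    (Q : List (S × A) → S → A → S → ℝ) (r : S → A → S → ℝ) :
    ℕ → List (S × A) → S → ℝ
  | 0, h, s => ∑ a, π h s a * ∑ s', Q (h ++ [(s, a)]) s a s' * r s a s'
  | (t + 1), h, s =>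
      ∑ a, π h s a * ∑ s', Q (h ++ [(s, a)]) s a s' * expRHH π Q r t (h ++ [(s, a)]) s'

noncomputable def vHH (π : List (S × A) → S → A → ℝ)
    (Q : List (S × A) → S → A → S → ℝ) (r : S → A → S → ℝ) (γ : ℝ) (s : S) : ℝ :=
  ∑' t : ℕ, γ ^ t * expRHH π Q r t [] s

def STractable (US : Set (S → A → S → ℝ)) : Prop :=
  ∀ π : S → A → ℝ, IsPolicy π →
    ∀ (r : S → A → S → ℝ) (γ : ℝ), 0 ≤ γ → γ < 1 →
      ∀ v : (S → A → S → ℝ) → S → ℝ, (∀ P ∈ US, TpiP π r γ P (v P) = v P) →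
        ∀ u : S → ℝ, Tpi US π r γ u = u →
          ∀ μ ∈ stdSimplex ℝ S,
            minOver US (fun P => ∑ s, μ s * v P s) = ∑ s, μ s * u s

def SATractable (US : Set (S → A → S → ℝ)) : Prop :=
  ∀ π : S → A → ℝ, IsPolicy π →
    ∀ (r : S → A → S → ℝ) (γ : ℝ), 0 ≤ γ → γ < 1 →
      ∀ v : (S → A → S → ℝ) → S → ℝ, (∀ P ∈ US, TpiP π r γ P (v P) = v P) →
        ∀ uhat : S → ℝ, TpiHat US π r γ uhat = uhat →
          ∀ μ ∈ stdSimplex ℝ S,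
            minOver US (fun P => ∑ s, μ s * v P s) = ∑ s, μ s * uhat s

def WeakSTractable (US : Set (S → A → S → ℝ)) : Prop :=
  ∀ π : S → A → ℝ, IsPolicy π →
    ∀ (r : S → A → S → ℝ), NextStateIndep r → ∀ γ : ℝ, 0 ≤ γ → γ < 1 →
      ∀ v : (S → A → S → ℝ) → S → ℝ, (∀ P ∈ US, TpiP π r γ P (v P) = v P) →
        ∀ u : S → ℝ, Tpi US π r γ u = u →
          ∀ μ ∈ stdSimplex ℝ S,
            minOver US (fun P => ∑ s, μ s * v P s) = ∑ s, μ s * u s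

def WeakSATractable (US : Set (S → A → S → ℝ)) : Prop :=
  ∀ π : S → A → ℝ, IsPolicy π →
    ∀ (r : S → A → S → ℝ), NextStateIndep r → ∀ γ : ℝ, 0 ≤ γ → γ < 1 →
      ∀ v : (S → A → S → ℝ) → S → ℝ, (∀ P ∈ US, TpiP π r γ P (v P) = v P) →
        ∀ uhat : S → ℝ, TpiHat US π r γ uhat = uhat →
          ∀ μ ∈ stdSimplex ℝ S,
            minOver US (fun P => ∑ s, μ s * v P s) = ∑ s, μ s * uhat s

def SSPs (US : Set (S → A → S → ℝ)) : Prop :=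
  ∀ V : S → A → S → ℝ, ∃ Pstar ∈ US, ∀ s : S, ∀ P ∈ US,
    (∑ a, ∑ s', Pstar s a s' * V s a s') ≤ ∑ a, ∑ s', P s a s' * V s a s'

def SSPsa (US : Set (S → A → S → ℝ)) : Prop :=
  ∀ V : S → A → S → ℝ, ∃ Pstar ∈ US, ∀ (s : S) (a : A), ∀ P ∈ US,
    (∑ s', Pstar s a s' * V s a s') ≤ ∑ s', P s a s' * V s a s'

def WeakSSPs (US : Set (S → A → S → ℝ)) : Prop :=
  ∀ π : S → A → ℝ, IsPolicy π → ∀ V : S → ℝ, ∃ Pstar ∈ US, ∀ s : S, ∀ P ∈ US,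
    (∑ a, π s a * ∑ s', Pstar s a s' * V s') ≤ ∑ a, π s a * ∑ s', P s a s' * V s'

def WeakSSPsa (US : Set (S → A → S → ℝ)) : Prop :=
  ∀ V : S → ℝ, ∃ Pstar ∈ US, ∀ (s : S) (a : A), ∀ P ∈ US,
    (∑ s', Pstar s a s' * V s') ≤ ∑ s', P s a s' * V s'


section Aux

variable [Nonempty S] [Nonempty A]
variable {US : Set (S → A → S → ℝ)} {π : S → A → ℝ} {r : S → A → S → ℝ} {γ : ℝ}

lemma wavg_le {ι : Type*} [Fintype ι] {p g : ι → ℝ} {c : ℝ}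
    (hp0 : ∀ i, 0 ≤ p i) (hp1 : ∑ i, p i = 1) (h : ∀ i, g i ≤ c) :
    ∑ i, p i * g i ≤ c := by
  calc ∑ i, p i * g i ≤ ∑ i, p i * c :=
        Finset.sum_le_sum (fun i _ => mul_le_mul_of_nonneg_left (h i) (hp0 i))
    _ = c := by rw [← Finset.sum_mul, hp1, one_mul]

lemma wavg_ge {ι : Type*} [Fintype ι] {p g : ι → ℝ} {c : ℝ}
    (hp0 : ∀ i, 0 ≤ p i) (hp1 : ∑ i, p i = 1) (h : ∀ i, c ≤ g i) :
    c ≤ ∑ i, p i * g i := by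
  calc c = ∑ i, p i * c := by rw [← Finset.sum_mul, hp1, one_mul]
    _ ≤ ∑ i, p i * g i :=
        Finset.sum_le_sum (fun i _ => mul_le_mul_of_nonneg_left (h i) (hp0 i))

lemma inner_bddBelow (hker : ∀ P ∈ US, IsKernel P) (s : S) (a : A) (v : S → ℝ) :
    BddBelow ((fun P => ∑ s', P s a s' * (r s a s' + γ * v s')) '' US) := by
  classical
  refine ⟨-(Finset.univ.sup' Finset.univ_nonempty (fun s' : S => |r s a s' + γ * v s'|)), ?_⟩
  rintro y ⟨P, hP, rfl⟩
  refine wavg_ge (fun s' => (hker P hP s a).1 s') (hker P hP s a).2 (fun s' => ?_)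
  exact (abs_le.mp (Finset.le_sup' (fun s' : S => |r s a s' + γ * v s'|)
    (Finset.mem_univ s'))).1

lemma outer_bddBelow (hker : ∀ P ∈ US, IsKernel P) (hπ : IsPolicy π) (s : S) (v : S → ℝ) :
    BddBelow ((fun P => ∑ a, π s a * ∑ s', P s a s' * (r s a s' + γ * v s')) '' US) := by
  classical
  set C := Finset.univ.sup' Finset.univ_nonempty (fun q : A × S => |r s q.1 q.2 + γ * v q.2|)
    with hC
  refine ⟨-C, ?_⟩
  rintro y ⟨P, hP, rfl⟩
  refine wavg_ge (fun a => (hπ s).1 a) (hπ s).2 (fun a => ?_)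
  refine wavg_ge (fun s' => (hker P hP s a).1 s') (hker P hP s a).2 (fun s' => ?_)
  rw [hC]
  exact (abs_le.mp (Finset.le_sup' (fun q : A × S => |r s q.1 q.2 + γ * v q.2|)
    (Finset.mem_univ ((a, s') : A × S)))).1

lemma minOver_le {f : (S → A → S → ℝ) → ℝ} (hbdd : BddBelow (f '' US)) {P} (hP : P ∈ US) :
    minOver US f ≤ f P := csInf_le hbdd ⟨P, hP, rfl⟩

lemma le_minOver (hne : US.Nonempty) {f : (S → A → S → ℝ) → ℝ} {c : ℝ}
    (h : ∀ P ∈ US, c ≤ f P) : c ≤ minOver US f := by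
  refine le_csInf (hne.image f) ?_
  rintro y ⟨P, hP, rfl⟩
  exact h P hP

lemma minOver_le_add (hne : US.Nonempty) {f g : (S → A → S → ℝ) → ℝ} {c : ℝ}
    (hbddf : BddBelow (f '' US)) (h : ∀ P ∈ US, f P ≤ g P + c) :
    minOver US f ≤ minOver US g + c := by
  rw [← sub_le_iff_le_add]
  refine le_csInf (hne.image g) ?_
  rintro y ⟨P, hP, rfl⟩
  have h1 := minOver_le hbddf hP
  have h2 := h P hP
  linarith

lemma inner_shift {P : S → A → S → ℝ} (hkP : IsKernel P) (hγ0 : 0 ≤ γ) {v w : S → ℝ} {c : ℝ}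
    (h : ∀ s', v s' ≤ w s' + c) (s : S) (a : A) :
    ∑ s', P s a s' * (r s a s' + γ * v s')
      ≤ (∑ s', P s a s' * (r s a s' + γ * w s')) + γ * c := by
  have h1 : ∀ s', P s a s' * (r s a s' + γ * v s')
      ≤ P s a s' * ((r s a s' + γ * w s') + γ * c) := fun s' => by
    refine mul_le_mul_of_nonneg_left ?_ ((hkP s a).1 s')
    have := mul_le_mul_of_nonneg_left (h s') hγ0
    have hma : γ * (w s' + c) = γ * w s' + γ * c := mul_add γ (w s') c
    linarith
  calc ∑ s', P s a s' * (r s a s' + γ * v s')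
      ≤ ∑ s', P s a s' * ((r s a s' + γ * w s') + γ * c) :=
        Finset.sum_le_sum (fun s' _ => h1 s')
    _ = (∑ s', P s a s' * (r s a s' + γ * w s')) + γ * c := by
        simp only [mul_add, Finset.sum_add_distrib, ← Finset.sum_mul]
        rw [(hkP s a).2, one_mul]

lemma TpiP_shift (hπ : IsPolicy π) {P : S → A → S → ℝ} (hkP : IsKernel P) (hγ0 : 0 ≤ γ)
    {v w : S → ℝ} {c : ℝ} (h : ∀ s', v s' ≤ w s' + c) (s : S) :
    TpiP π r γ P v s ≤ TpiP π r γ P w s + γ * c := by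
  unfold TpiP
  calc ∑ a, π s a * ∑ s', P s a s' * (r s a s' + γ * v s')
      ≤ ∑ a, π s a * ((∑ s', P s a s' * (r s a s' + γ * w s')) + γ * c) :=
        Finset.sum_le_sum (fun a _ =>
          mul_le_mul_of_nonneg_left (inner_shift hkP hγ0 h s a) ((hπ s).1 a))
    _ = _ := by
        simp only [mul_add, Finset.sum_add_distrib, ← Finset.sum_mul]
        rw [(hπ s).2, one_mul]

lemma Tpi_shift (hne : US.Nonempty) (hker : ∀ P ∈ US, IsKernel P) (hπ : IsPolicy π)
    (hγ0 : 0 ≤ γ) {v w : S → ℝ} {c : ℝ} (h : ∀ s', v s' ≤ w s' + c) (s : S) :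
    Tpi US π r γ v s ≤ Tpi US π r γ w s + γ * c := by
  unfold Tpi
  exact minOver_le_add hne (outer_bddBelow hker hπ s v)
    (fun P hP => TpiP_shift hπ (hker P hP) hγ0 h s)

lemma TpiHat_shift (hne : US.Nonempty) (hker : ∀ P ∈ US, IsKernel P) (hπ : IsPolicy π)
    (hγ0 : 0 ≤ γ) {v w : S → ℝ} {c : ℝ} (h : ∀ s', v s' ≤ w s' + c) (s : S) :
    TpiHat US π r γ v s ≤ TpiHat US π r γ w s + γ * c := by
  unfold TpiHat
  calc ∑ a, π s a * minOver US (fun P => ∑ s', P s a s' * (r s a s' + γ * v s'))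
      ≤ ∑ a, π s a *
          (minOver US (fun P => ∑ s', P s a s' * (r s a s' + γ * w s')) + γ * c) :=
        Finset.sum_le_sum (fun a _ => mul_le_mul_of_nonneg_left
          (minOver_le_add hne (inner_bddBelow hker s a v)
            (fun P hP => inner_shift (hker P hP) hγ0 h s a)) ((hπ s).1 a))
    _ = _ := by
        simp only [mul_add, Finset.sum_add_distrib, ← Finset.sum_mul]
        rw [(hπ s).2, one_mul]

lemma TpiHat_le_Tpi (hne : US.Nonempty) (hker : ∀ P ∈ US, IsKernel P) (hπ : IsPolicy π)
    (v : S → ℝ) (s : S) : TpiHat US π r γ v s ≤ Tpi US π r γ v s := by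
  unfold TpiHat Tpi
  refine le_minOver hne (fun P hP => ?_)
  exact Finset.sum_le_sum (fun a _ => mul_le_mul_of_nonneg_left
    (minOver_le (inner_bddBelow hker s a v) hP) ((hπ s).1 a))

lemma comparison {f g : S → ℝ} (hγ0 : 0 ≤ γ) (hγ1 : γ < 1)
    (step : ∀ c : ℝ, 0 ≤ c → (∀ s, f s ≤ g s + c) → ∀ s, f s ≤ g s + γ * c) :
    ∀ s, f s ≤ g s := by
  classical
  obtain ⟨s0, -, hs0⟩ := Finset.exists_mem_eq_sup' Finset.univ_nonempty (fun s : S => f s - g s)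
  have hle : ∀ s : S, f s - g s ≤ f s0 - g s0 := fun s => by
    rw [← hs0]; exact Finset.le_sup' (fun s : S => f s - g s) (Finset.mem_univ s)
  by_cases hMle : f s0 - g s0 ≤ 0
  · intro s; have := hle s; linarith
  · push_neg at hMle
    exfalso
    have hstep := step (f s0 - g s0) (le_of_lt hMle) (fun s => by have := hle s; linarith) s0
    nlinarith

lemma exists_fixedPt_of_shift (hγ0 : 0 ≤ γ) (hγ1 : γ < 1) {T : (S → ℝ) → (S → ℝ)}
    (hT : ∀ v w : S → ℝ, ∀ c : ℝ, 0 ≤ c → (∀ s, v s ≤ w s + c) → ∀ s, T v s ≤ T w s + γ * c) :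
    ∃ v : S → ℝ, T v = v := by
  have hlip : LipschitzWith ⟨γ, hγ0⟩ T := by
    apply LipschitzWith.of_dist_le_mul
    intro v w
    show dist (T v) (T w) ≤ γ * dist v w
    rw [dist_pi_le_iff (mul_nonneg hγ0 dist_nonneg)]
    intro s
    rw [Real.dist_eq]
    have hvw : ∀ s', v s' ≤ w s' + dist v w := fun s' => by
      have h1 := dist_le_pi_dist v w s'
      rw [Real.dist_eq] at h1
      have := (abs_le.mp h1).2
      linarith
    have hwv : ∀ s', w s' ≤ v s' + dist v w := fun s' => by
      have h1 := dist_le_pi_dist v w s'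
      rw [Real.dist_eq] at h1
      have := (abs_le.mp h1).1
      linarith
    have h1 := hT v w (dist v w) dist_nonneg hvw s
    have h2 := hT w v (dist v w) dist_nonneg hwv s
    rw [abs_le]
    constructor <;> [linarith; linarith]
  have hcontr : ContractingWith ⟨γ, hγ0⟩ T := ⟨by exact_mod_cast hγ1, hlip⟩
  exact ⟨hcontr.fixedPoint T, hcontr.fixedPoint_isFixedPt⟩

lemma u_eq_uhat (hne : US.Nonempty) (hker : ∀ P ∈ US, IsKernel P) (hSA : SATractable US)
    (hπ : IsPolicy π) (hγ0 : 0 ≤ γ) (hγ1 : γ < 1) {u uhat : S → ℝ}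
    (hu : Tpi US π r γ u = u) (huhat : TpiHat US π r γ uhat = uhat) : u = uhat := by
  classical
  have hex : ∀ P ∈ US, ∃ v : S → ℝ, TpiP π r γ P v = v := fun P hP =>
    exists_fixedPt_of_shift hγ0 hγ1
      (fun v w c _ h => TpiP_shift hπ (hker P hP) hγ0 h)
  choose! vfun hv using hex
  have huv : ∀ P ∈ US, ∀ s, u s ≤ vfun P s := by
    intro P hP
    refine comparison hγ0 hγ1 (fun c hc hle s => ?_)
    have h1 : Tpi US π r γ u s ≤ TpiP π r γ P u s :=
      minOver_le (outer_bddBelow hker hπ s u) hP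
    have h2 := TpiP_shift (r := r) hπ (hker P hP) hγ0 hle s
    rw [hv P hP] at h2
    calc u s = Tpi US π r γ u s := by rw [hu]
      _ ≤ TpiP π r γ P u s := h1
      _ ≤ vfun P s + γ * c := h2
  have hhatle : ∀ s, uhat s ≤ u s := by
    refine comparison hγ0 hγ1 (fun c hc hle s => ?_)
    calc uhat s = TpiHat US π r γ uhat s := by rw [huhat]
      _ ≤ Tpi US π r γ uhat s := TpiHat_le_Tpi hne hker hπ uhat s
      _ ≤ Tpi US π r γ u s + γ * c := Tpi_shift hne hker hπ hγ0 hle s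
      _ = u s + γ * c := by rw [hu]
  have hδ : ∀ s : S, (fun s' => if s' = s then (1 : ℝ) else 0) ∈ stdSimplex ℝ S := by
    intro s
    constructor
    · intro x; dsimp only; split <;> norm_num
    · simp
  have hle2 : ∀ s, u s ≤ uhat s := by
    intro s
    have key := hSA π hπ r γ hγ0 hγ1 vfun hv uhat huhat _ (hδ s)
    have hL : (fun P => ∑ s', (if s' = s then (1 : ℝ) else 0) * vfun P s')
        = fun P => vfun P s := by
      funext P
      simp [ite_mul]
    have hR : (∑ s', (if s' = s then (1 : ℝ) else 0) * uhat s') = uhat s := by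
      simp [ite_mul]
    rw [hL, hR] at key
    rw [← key]
    exact le_minOver hne (fun P hP => huv P hP s)
  funext s
  exact le_antisymm (hle2 s) (hhatle s)

end Aux

theorem stmt0 {S A : Type*} [Fintype S] [Fintype A] [Nonempty S] [Nonempty A]
    (US : Set (S → A → S → ℝ)) (hne : US.Nonempty) (hker : ∀ P ∈ US, IsKernel P)
    (hcpt : IsCompact US) (hSA : SATractable US) :
    STractable US ∧
      ∀ π : S → A → ℝ, IsPolicy π →
        ∀ (r : S → A → S → ℝ) (γ : ℝ), 0 ≤ γ → γ < 1 →
          ∀ u uhat : S → ℝ, Tpi US π r γ u = u → TpiHat US π r γ uhat = uhat →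
            u = uhat := by
  constructor
  · intro π hπ r γ hγ0 hγ1 v hv u hu μ hμ
    obtain ⟨uhat, huhat⟩ := exists_fixedPt_of_shift hγ0 hγ1
      (fun v w c _ h => TpiHat_shift hne hker hπ hγ0 h)
    have hmin := hSA π hπ r γ hγ0 hγ1 v hv uhat huhat μ hμ
    have heq := u_eq_uhat hne hker hSA hπ hγ0 hγ1 hu huhat
    rw [hmin, heq]
  · intro π hπ r γ hγ0 hγ1 u uhat hu huhat
    exact u_eq_uhat hne hker hSA hπ hγ0 hγ1 hu huhat

end RMDP
end

section
/- Let S and A be nonempty finite sets and let 𝒫 ⊆ Δ(S)^{S×A} be a compact (not necessarily convex) uncertainty set. The following three statements are equivalent: (1) 𝒫 is s-tractable; (2) for every stationary policy π ∈ Δ(A)^S, every r ∈ ℝ^{S×A×S} and every γ ∈ [0,1), there exists P̂ ∈ 𝒫 such that u^π = v^{π,P̂}; (3) 𝒫 satisfies the simultaneous solvability property (SSP). -/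
open scoped BigOperators

namespace RMDP

variable {S A : Type*} [Fintype S] [Fintype A]

/-- Feasibility of the vector `u^π`: for every stationary policy, rewards and discount factor,
the fixed point of `Tpi` is the value function of some kernel in the uncertainty set. -/
def SFeasible {S A : Type*} [Fintype S] [Fintype A] (US : Set (S → A → S → ℝ)) : Prop :=
  ∀ π : S → A → ℝ, IsPolicy π →
    ∀ (r : S → A → S → ℝ) (γ : ℝ), 0 ≤ γ → γ < 1 →
      ∀ u : S → ℝ, Tpi US π r γ u = u → ∃ Phat ∈ US, TpiP π r γ Phat u = u

section Aux

variable [Nonempty S] [Nonempty A]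

private lemma cont_eval (s : S) (a : A) (s' : S) :
    Continuous (fun P : S → A → S → ℝ => P s a s') :=
  (continuous_apply s').comp ((continuous_apply a).comp (continuous_apply s))

private lemma cont_wsum (s : S) (w : A → ℝ) (c : A → S → ℝ) :
    Continuous (fun P : S → A → S → ℝ => ∑ a, w a * ∑ s', P s a s' * c a s') := by
  refine continuous_finset_sum _ fun a _ => Continuous.mul continuous_const ?_
  exact continuous_finset_sum _ fun s' _ => (cont_eval s a s').mul continuous_const

private lemma cont_dsum (s : S) (V : S → A → S → ℝ) :
    Continuous (fun P : S → A → S → ℝ => ∑ a, ∑ s', P s a s' * V s a s') := by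
  refine continuous_finset_sum _ fun a _ => ?_
  exact continuous_finset_sum _ fun s' _ => (cont_eval s a s').mul continuous_const

/-- weighted averages respect lower bounds -/
private lemma avg_ge {π : S → A → ℝ} (hπ : IsPolicy π) {P : S → A → S → ℝ}
    (hP : IsKernel P) (s : S) (d : S → ℝ) (m : ℝ) (hm : ∀ s', m ≤ d s') :
    m ≤ ∑ a, π s a * ∑ s', P s a s' * d s' := by
  have h1 : ∀ a : A, m ≤ ∑ s', P s a s' * d s' := by
    intro a
    calc m = ∑ s', P s a s' * m := by
          rw [← Finset.sum_mul, (hP s a).2, one_mul]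
      _ ≤ ∑ s', P s a s' * d s' :=
          Finset.sum_le_sum fun s' _ => mul_le_mul_of_nonneg_left (hm s') ((hP s a).1 s')
  calc m = ∑ a, π s a * m := by rw [← Finset.sum_mul, (hπ s).2, one_mul]
    _ ≤ ∑ a, π s a * ∑ s', P s a s' * d s' :=
        Finset.sum_le_sum fun a _ => mul_le_mul_of_nonneg_left (h1 a) ((hπ s).1 a)

private lemma tpiP_sub (π : S → A → ℝ) (r : S → A → S → ℝ) (γ : ℝ)
    (P : S → A → S → ℝ) (x y : S → ℝ) (s : S) :
    TpiP π r γ P y s - TpiP π r γ P x s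
      = γ * ∑ a, π s a * ∑ s', P s a s' * (y s' - x s') := by
  unfold TpiP
  simp only [Finset.mul_sum, ← Finset.sum_sub_distrib]
  refine Finset.sum_congr rfl fun a _ => ?_
  refine Finset.sum_congr rfl fun s' _ => by ring

/-- comparison principle: subsolutions are below supersolutions -/
private lemma sub_le_sup {π : S → A → ℝ} (hπ : IsPolicy π) (r : S → A → S → ℝ)
    {γ : ℝ} (hγ0 : 0 ≤ γ) (hγ1 : γ < 1) {P : S → A → S → ℝ} (hP : IsKernel P)
    {x y : S → ℝ} (hx : ∀ s, x s ≤ TpiP π r γ P x s) (hy : ∀ s, TpiP π r γ P y s ≤ y s) :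
    ∀ s, x s ≤ y s := by
  obtain ⟨s0, -, hs0⟩ := Finset.exists_min_image Finset.univ (fun s => y s - x s)
    ⟨Classical.arbitrary S, Finset.mem_univ _⟩
  have hs0' : ∀ s, y s0 - x s0 ≤ y s - x s := fun s => hs0 s (Finset.mem_univ s)
  have havg : y s0 - x s0 ≤ ∑ a, π s0 a * ∑ s', P s0 a s' * (y s' - x s') :=
    avg_ge hπ hP s0 _ _ hs0'
  have hkey : γ * (y s0 - x s0) ≤ y s0 - x s0 := by
    calc γ * (y s0 - x s0) ≤ γ * ∑ a, π s0 a * ∑ s', P s0 a s' * (y s' - x s') :=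
          mul_le_mul_of_nonneg_left havg hγ0
      _ = TpiP π r γ P y s0 - TpiP π r γ P x s0 := (tpiP_sub π r γ P x y s0).symm
      _ ≤ y s0 - x s0 := by have := hx s0; have := hy s0; linarith
  have hm0 : 0 ≤ y s0 - x s0 := by nlinarith
  intro s
  have := hs0' s
  linarith

private lemma lemA (US : Set (S → A → S → ℝ)) (hker : ∀ P ∈ US, IsKernel P) :
    SSPs US → SFeasible US := by
  intro hssp π hπ r γ hγ0 hγ1 u hu
  obtain ⟨Pstar, hPstar, hmin⟩ := hssp (fun s a s' => π s a * (r s a s' + γ * u s'))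
  refine ⟨Pstar, hPstar, ?_⟩
  have hrw : ∀ (P : S → A → S → ℝ) (s : S),
      TpiP π r γ P u s = ∑ a, ∑ s', P s a s' * (π s a * (r s a s' + γ * u s')) := by
    intro P s
    simp only [TpiP, Finset.mul_sum]
    exact Finset.sum_congr rfl fun a _ => Finset.sum_congr rfl fun s' _ => by ring
  funext s
  have hleast : IsLeast ((fun P => TpiP π r γ P u s) '' US) (TpiP π r γ Pstar u s) := by
    constructor
    · exact ⟨Pstar, hPstar, rfl⟩
    · rintro x ⟨P, hPUS, rfl⟩
      exact le_of_le_of_eq (le_of_eq_of_le (hrw Pstar s) (hmin s P hPUS)) (hrw P s).symm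
  have : Tpi US π r γ u s = TpiP π r γ Pstar u s := by
    rw [Tpi, minOver]
    exact hleast.csInf_eq
  rw [← this]
  exact congrFun hu s

private lemma lemB (US : Set (S → A → S → ℝ)) (hne : US.Nonempty)
    (hker : ∀ P ∈ US, IsKernel P) (hcpt : IsCompact US) :
    SFeasible US → STractable US := by
  intro hfe π hπ r γ hγ0 hγ1 v hv u hu μ hμ
  -- u ≤ v P for all P ∈ US
  have hbdd : ∀ s : S, BddBelow ((fun P => TpiP π r γ P u s) '' US) := fun s =>
    ((hcpt.image (cont_wsum s (π s) (fun a s' => r s a s' + γ * u s'))).bddBelow)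
  have hsub : ∀ P ∈ US, ∀ s, u s ≤ TpiP π r γ P u s := by
    intro P hP s
    have : Tpi US π r γ u s ≤ TpiP π r γ P u s :=
      csInf_le (hbdd s) ⟨P, hP, rfl⟩
    calc u s = Tpi US π r γ u s := (congrFun hu s).symm
      _ ≤ TpiP π r γ P u s := this
  have hlow : ∀ P ∈ US, ∀ s, u s ≤ v P s := by
    intro P hP
    exact sub_le_sup hπ r hγ0 hγ1 (hker P hP) (hsub P hP)
      (fun s => le_of_eq (congrFun (hv P hP) s))
  obtain ⟨Phat, hPhat, hPhatFix⟩ := hfe π hπ r γ hγ0 hγ1 u hu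
  have hvu : v Phat = u := by
    funext s
    refine le_antisymm ?_ (hlow Phat hPhat s)
    exact sub_le_sup hπ r hγ0 hγ1 (hker Phat hPhat)
      (fun s => (congrFun (hv Phat hPhat) s).ge)
      (fun s => (congrFun hPhatFix s).le) s
  rw [minOver]
  have hlb : ∀ x ∈ (fun P => ∑ s, μ s * v P s) '' US, (∑ s, μ s * u s) ≤ x := by
    rintro x ⟨P, hP, rfl⟩
    exact Finset.sum_le_sum fun s _ => mul_le_mul_of_nonneg_left (hlow P hP s) (hμ.1 s)
  refine le_antisymm (csInf_le ⟨_, hlb⟩ ⟨Phat, hPhat, show (∑ s, μ s * v Phat s) = ∑ s, μ s * u s by rw [hvu]⟩) (le_csInf ?_ hlb)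
  exact ⟨_, ⟨Phat, hPhat, rfl⟩⟩

private lemma lemC (US : Set (S → A → S → ℝ)) (hne : US.Nonempty)
    (hcpt : IsCompact US) :
    STractable US → SSPs US := by
  intro ht V
  set f : S → (S → A → S → ℝ) → ℝ := fun s P => ∑ a, ∑ s', P s a s' * V s a s' with hf
  have hcA : (0 : ℝ) < Fintype.card A := by
    exact_mod_cast Fintype.card_pos
  have hcS : (0 : ℝ) < Fintype.card S := by
    exact_mod_cast Fintype.card_pos
  set π : S → A → ℝ := fun _ _ => ((Fintype.card A : ℝ))⁻¹ with hπdef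
  have hπ : IsPolicy π := by
    intro s
    constructor
    · intro a; positivity
    · simp [hπdef, Finset.sum_const, Finset.card_univ]
  set r : S → A → S → ℝ := fun s a s' => (Fintype.card A : ℝ) * V s a s' with hrdef
  have hTpiP : ∀ (P : S → A → S → ℝ) (x : S → ℝ) (s : S), TpiP π r 0 P x s = f s P := by
    intro P x s
    simp only [TpiP, hπdef, hrdef, hf, Finset.mul_sum]
    refine Finset.sum_congr rfl fun a _ => Finset.sum_congr rfl fun s' _ => ?_
    rw [zero_mul, add_zero]
    field_simp
  set u : S → ℝ := fun s => minOver US (f s) with hudef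
  have hfun : ∀ s : S, (fun P => ∑ a, π s a * ∑ s', P s a s' * (r s a s' + 0 * u s'))
      = f s := fun s => funext fun P => hTpiP P u s
  have hu : Tpi US π r 0 u = u := by
    funext s
    rw [Tpi, hfun s]
  have hv : ∀ P ∈ US, TpiP π r 0 P (fun s => f s P) = fun s => f s P := by
    intro P _
    funext s
    exact hTpiP P _ s
  set μ : S → ℝ := fun _ => ((Fintype.card S : ℝ))⁻¹ with hμdef
  have hμ : μ ∈ stdSimplex ℝ S := by
    constructor
    · intro s; positivity
    · simp [hμdef, Finset.sum_const, Finset.card_univ]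
  have hmain := ht π hπ r 0 le_rfl zero_lt_one (fun P s => f s P) hv u hu μ hμ
  -- lower bounds
  have hbdd : ∀ s : S, BddBelow (f s '' US) := fun s =>
    (hcpt.image (cont_dsum s V)).bddBelow
  have hub : ∀ s : S, ∀ P ∈ US, u s ≤ f s P := fun s P hP =>
    csInf_le (hbdd s) ⟨P, hP, rfl⟩
  -- nested compact sets
  set K : ℕ → Set (S → A → S → ℝ) :=
    fun n => US ∩ {P | ∀ s, f s P ≤ u s + 1 / ((n : ℝ) + 1)} with hK
  have hKne : ∀ n, (K n).Nonempty := by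
    intro n
    have hεpos : (0 : ℝ) < ((Fintype.card S : ℝ))⁻¹ * (1 / ((n : ℝ) + 1)) := by positivity
    have himgne : ((fun P => ∑ s, μ s * f s P) '' US).Nonempty := hne.image _
    have hlt : sInf ((fun P => ∑ s, μ s * f s P) '' US)
        < (∑ s, μ s * u s) + ((Fintype.card S : ℝ))⁻¹ * (1 / ((n : ℝ) + 1)) := by
      rw [← minOver, hmain]; linarith
    obtain ⟨x, ⟨P, hP, rfl⟩, hxlt⟩ := exists_lt_of_csInf_lt himgne hlt
    refine ⟨P, hP, fun s => ?_⟩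
    have hsplit : ∑ s, μ s * (f s P - u s) = (∑ s, μ s * f s P) - ∑ s, μ s * u s := by
      rw [← Finset.sum_sub_distrib]
      exact Finset.sum_congr rfl fun s _ => by ring
    have hterm : μ s * (f s P - u s) ≤ ∑ s, μ s * (f s P - u s) :=
      Finset.single_le_sum
        (fun i _ => mul_nonneg (hμ.1 i) (sub_nonneg.2 (hub i P hP))) (Finset.mem_univ s)
    have hμs : μ s = ((Fintype.card S : ℝ))⁻¹ := rfl
    have h2 : ((Fintype.card S : ℝ))⁻¹ * (f s P - u s)
        < ((Fintype.card S : ℝ))⁻¹ * (1 / ((n : ℝ) + 1)) := by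
      rw [← hμs]; linarith
    have := (mul_lt_mul_iff_right₀ (by positivity : (0:ℝ) < ((Fintype.card S : ℝ))⁻¹)).mp h2
    linarith
  have hKcl : ∀ n, IsClosed (K n) := by
    intro n
    refine hcpt.isClosed.inter ?_
    have : {P : S → A → S → ℝ | ∀ s, f s P ≤ u s + 1 / ((n : ℝ) + 1)}
        = ⋂ s, {P | f s P ≤ u s + 1 / ((n : ℝ) + 1)} := by
      ext P; simp [Set.mem_iInter]
    rw [this]
    exact isClosed_iInter fun s => isClosed_le (cont_dsum s V) continuous_const
  have hKmono : ∀ n, K (n + 1) ⊆ K n := by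
    intro n P hPK
    refine ⟨hPK.1, fun s => ?_⟩
    have h1 : (1 : ℝ) / ((n : ℝ) + 1 + 1) ≤ 1 / ((n : ℝ) + 1) := by
      apply one_div_le_one_div_of_le <;> [positivity; linarith]
    have := hPK.2 s
    push_cast at this ⊢
    linarith
  have hK0 : IsCompact (K 0) :=
    hcpt.of_isClosed_subset (hKcl 0) Set.inter_subset_left
  obtain ⟨Pstar, hPstar⟩ :=
    IsCompact.nonempty_iInter_of_sequence_nonempty_isCompact_isClosed K hKmono hKne hK0 hKcl
  simp only [Set.mem_iInter] at hPstar
  have hPstarUS : Pstar ∈ US := (hPstar 0).1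
  have hPstarle : ∀ s, f s Pstar ≤ u s := by
    intro s
    by_contra hcon
    push_neg at hcon
    obtain ⟨n, hn⟩ := exists_nat_one_div_lt (sub_pos.2 hcon)
    have := (hPstar n).2 s
    linarith
  exact ⟨Pstar, hPstarUS, fun s P hP => le_trans (hPstarle s) (hub s P hP)⟩

end Aux

theorem stmt1 {S A : Type*} [Fintype S] [Fintype A] [Nonempty S] [Nonempty A]
    (US : Set (S → A → S → ℝ)) (hne : US.Nonempty) (hker : ∀ P ∈ US, IsKernel P)
    (hcpt : IsCompact US) :
    (STractable US ↔ SFeasible US) ∧ (SFeasible US ↔ SSPs US) := by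
  have hA := lemA US hker
  have hB := lemB US hne hker hcpt
  have hC := lemC US hne hcpt
  exact ⟨⟨fun h => hA (hC h), hB⟩, fun h => hC (hB h), hA⟩

end RMDP
end

section
/- Let S and A be nonempty finite sets and let 𝒫 ⊆ Δ(S)^{S×A} be a convex and compact uncertainty set. Then 𝒫 satisfies the simultaneous solvability property (SSP) if and only if 𝒫 is s-rectangular, i.e. 𝒫 equals the Cartesian product over s ∈ S of its state-marginals 𝒫_s. -/
/-!
Every linear functional on `ℝ^{S×A×S}` is a sum over states `s` of terms that depend only on the
rows `P s` of the kernel. If `𝒫` is s-rectangular, minimising each term separately over `𝒫` and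
gluing the rows of the minimisers gives a simultaneous minimiser in `𝒫`. Conversely, under SSP
one `P* ∈ 𝒫` minimises a given functional over the whole s-rectangular hull of `𝒫`, since every
row of a kernel in the hull is a row of some member of `𝒫`; a kernel of the hull outside the
closed convex set `𝒫` would be strictly separated from `𝒫` by some functional, which is impossible.
-/

open scoped BigOperators

namespace RMDP

variable {S A : Type*} [Fintype S] [Fintype A]

def sRectangularHull (US : Set (S → A → S → ℝ)) : Set (S → A → S → ℝ) :=
  {P | IsKernel P ∧ ∀ s : S, ∃ Q ∈ US, Q s = P s}

omit [Fintype A] in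
theorem subset_sRectangularHull {US : Set (S → A → S → ℝ)} (hker : ∀ P ∈ US, IsKernel P) :
    US ⊆ sRectangularHull US :=
  fun P hP => ⟨hker P hP, fun _ => ⟨P, hP, rfl⟩⟩

theorem sum_single_single_single [DecidableEq S] [DecidableEq A] (x : S → A → S → ℝ) :
    ∑ s, ∑ a, ∑ s', x s a s' • Pi.single s (Pi.single a (Pi.single s' 1)) = x := by
  ext t b t'
  simp [Finset.sum_apply, Pi.single_apply, ite_apply]

theorem _root_.LinearMap.apply_eq_sum_mul_apply_single [DecidableEq S] [DecidableEq A]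
    (f : (S → A → S → ℝ) →ₗ[ℝ] ℝ) (x : S → A → S → ℝ) :
    f x = ∑ s, ∑ a, ∑ s', x s a s' * f (Pi.single s (Pi.single a (Pi.single s' 1))) := by
  conv_lhs => rw [← sum_single_single_single x]
  simp only [map_sum, map_smul, smul_eq_mul]

theorem SSPs.exists_le_of_rows_mem {US : Set (S → A → S → ℝ)} (hssp : SSPs US)
    (f : (S → A → S → ℝ) →ₗ[ℝ] ℝ) :
    ∃ Pstar ∈ US, ∀ P, (∀ s, ∃ Q ∈ US, Q s = P s) → f Pstar ≤ f P := by
  classical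
  obtain ⟨Pstar, hPstar, hmin⟩ :=
    hssp fun s a s' => f (Pi.single s (Pi.single a (Pi.single s' 1)))
  refine ⟨Pstar, hPstar, fun P hrows => ?_⟩
  rw [f.apply_eq_sum_mul_apply_single, f.apply_eq_sum_mul_apply_single]
  refine Finset.sum_le_sum fun s _ => ?_
  obtain ⟨Q, hQ, hQs⟩ := hrows s
  simpa only [hQs] using hmin s Q hQ

theorem SSPs.sRectangularHull_subset {US : Set (S → A → S → ℝ)} (hssp : SSPs US)
    (hconv : Convex ℝ US) (hclosed : IsClosed US) : sRectangularHull US ⊆ US := by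
  rintro P ⟨-, hrows⟩
  by_contra hP
  obtain ⟨f, u, hfP, hfU⟩ := geometric_hahn_banach_point_closed hconv hclosed hP
  obtain ⟨Pstar, hPstar, hle⟩ := hssp.exists_le_of_rows_mem (f : (S → A → S → ℝ) →ₗ[ℝ] ℝ)
  exact (hfP.trans (hfU Pstar hPstar)).not_ge (hle P hrows)

theorem SSPs_of_sRectangularHull_subset {US : Set (S → A → S → ℝ)} (hne : US.Nonempty)
    (hcpt : IsCompact US) (hker : ∀ P ∈ US, IsKernel P) (hrect : sRectangularHull US ⊆ US) :
    SSPs US := by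
  intro V
  have hrow_min (s : S) : ∃ P ∈ US, IsMinOn (fun P => ∑ a, ∑ s', P s a s' * V s a s') US P :=
    hcpt.exists_isMinOn hne (by fun_prop)
  choose Ps hPs hmin using hrow_min
  refine ⟨fun s => Ps s s, hrect ⟨fun s => hker _ (hPs s) s, fun s => ⟨Ps s, hPs s, rfl⟩⟩, ?_⟩
  exact fun s P hP => hmin s hP

theorem stmt2_general {S A : Type*} [Fintype S] [Fintype A]
    (US : Set (S → A → S → ℝ)) (hne : US.Nonempty) (hker : ∀ P ∈ US, IsKernel P)
    (hcpt : IsCompact US) (hconv : Convex ℝ US) :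
    SSPs US ↔
      US = {P : S → A → S → ℝ | IsKernel P ∧ ∀ s : S, ∃ Q ∈ US, Q s = P s} :=
  ⟨fun hssp => (subset_sRectangularHull hker).antisymm
      (hssp.sRectangularHull_subset hconv hcpt.isClosed),
    fun hrect => SSPs_of_sRectangularHull_subset hne hcpt hker hrect.symm.subset⟩

theorem stmt2 {S A : Type*} [Fintype S] [Fintype A] [Nonempty S] [Nonempty A]
    (US : Set (S → A → S → ℝ)) (hne : US.Nonempty) (hker : ∀ P ∈ US, IsKernel P)
    (hcpt : IsCompact US) (hconv : Convex ℝ US) :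
    SSPs US ↔
      US = {P : S → A → S → ℝ | IsKernel P ∧ ∀ s : S, ∃ Q ∈ US, Q s = P s} :=
  stmt2_general US hne hker hcpt hconv

end RMDP
end

section
/- Let S and A be nonempty finite sets and let 𝒫 ⊆ Δ(S)^{S×A} be a compact (not necessarily convex) uncertainty set. The following three statements are equivalent: (1) 𝒫 is sa-tractable; (2) for every stationary policy π ∈ Δ(A)^S, every r ∈ ℝ^{S×A×S} and every γ ∈ [0,1), there exists P̂ ∈ 𝒫 such that û^π = v^{π,P̂}; (3) 𝒫 satisfies the sa-SSP. -/
open scoped BigOperators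

namespace RMDP

variable {S A : Type*} [Fintype S] [Fintype A]

/-- Feasibility of the vector `û^π`. -/
def SAFeasible {S A : Type*} [Fintype S] [Fintype A] (US : Set (S → A → S → ℝ)) : Prop :=
  ∀ π : S → A → ℝ, IsPolicy π →
    ∀ (r : S → A → S → ℝ) (γ : ℝ), 0 ≤ γ → γ < 1 →
      ∀ uhat : S → ℝ, TpiHat US π r γ uhat = uhat → ∃ Phat ∈ US, TpiP π r γ Phat uhat = uhat

/-!
With `P̂` as in (2), `û^π` is the fixed point of `T^π_{P̂}`, hence equals `v^{π,P̂}`; and since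
`û^π = T̂^π û^π ≤ T^π_P û^π` for every `P ∈ 𝒫`, the comparison principle for the monotone
contraction `T^π_P` gives `û^π ≤ v^{π,P}`, so `P̂` is a minimizer in (1). Conversely (3) gives (2)
by choosing `P*` for `V = r + γ û^π`. For (1) ⇒ (3) take `γ = 0`, `r = V` and uniform `π` and `μ`:
a minimizer `P*` of `P ↦ ∑ μ v^{π,P}` (compactness) then achieves the average of the row-wise
minima of `V`, and since all weights are positive it minimizes every row.
-/

section MinOver

variable {K : Type*} {K0 : Set K} {f : K → ℝ} {P : K}

lemma minOver_le_s3 [TopologicalSpace K] (hK : IsCompact K0) (hf : ContinuousOn f K0)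
    (hP : P ∈ K0) : minOver K0 f ≤ f P :=
  csInf_le (hK.bddBelow_image hf) (Set.mem_image_of_mem f hP)

lemma minOver_eq_of_isMinOn (hP : P ∈ K0) (hmin : IsMinOn f K0 P) : minOver K0 f = f P :=
  IsLeast.csInf_eq ⟨Set.mem_image_of_mem f hP, by rintro _ ⟨Q, hQ, rfl⟩; exact hmin hQ⟩

end MinOver

section Weights

variable {ι : Type*} [Fintype ι]

lemma const_inv_card_mem_stdSimplex [Nonempty ι] :
    (fun _ => (Fintype.card ι : ℝ)⁻¹) ∈ stdSimplex ℝ ι :=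
  ⟨fun _ => by positivity, by simp⟩

lemma le_sum_mul_of_mem_stdSimplex {p f : ι → ℝ} {m : ℝ} (hp : p ∈ stdSimplex ℝ ι)
    (hm : ∀ i, m ≤ f i) : m ≤ ∑ i, p i * f i :=
  calc m = ∑ i, p i * m := by rw [← Finset.sum_mul, hp.2, one_mul]
    _ ≤ ∑ i, p i * f i := by gcongr with i; exacts [hp.1 i, hm i]

lemma eq_of_le_of_sum_mul_eq {w f g : ι → ℝ} (hw : ∀ i, 0 < w i) (hfg : f ≤ g)
    (h : ∑ i, w i * f i = ∑ i, w i * g i) : f = g := by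
  funext i
  have hle : ∀ i ∈ Finset.univ, w i * f i ≤ w i * g i := fun i _ =>
    mul_le_mul_of_nonneg_left (hfg i) (hw i).le
  exact mul_left_cancel₀ (hw i).ne'
    ((Finset.sum_eq_sum_iff_of_le hle).1 h i (Finset.mem_univ i))

end Weights

section Bellman

variable {US : Set (S → A → S → ℝ)} {π : S → A → ℝ} {r : S → A → S → ℝ} {γ : ℝ}
  {P : S → A → S → ℝ}

lemma TpiP_sub_TpiP (x y : S → ℝ) (s : S) :
    TpiP π r γ P x s - TpiP π r γ P y s =
      γ * ∑ a, π s a * ∑ s', P s a s' * (x s' - y s') := by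
  simp only [TpiP, Finset.mul_sum, ← Finset.sum_sub_distrib]
  exact Finset.sum_congr rfl fun a _ => Finset.sum_congr rfl fun s' _ => by ring

lemma TpiHat_le_TpiP (hcpt : IsCompact US) (hπ : IsPolicy π) (hP : P ∈ US) (u : S → ℝ) :
    TpiHat US π r γ u ≤ TpiP π r γ P u := fun s => by
  unfold TpiHat TpiP
  gcongr with a
  · exact (hπ s).1 a
  · exact minOver_le_s3 hcpt (by fun_prop) hP

lemma le_of_le_TpiP_of_TpiP_eq [Nonempty S] (hπ : IsPolicy π) (hP : IsKernel P)
    (hγ0 : 0 ≤ γ) (hγ1 : γ < 1) {x y : S → ℝ} (hy : y ≤ TpiP π r γ P y)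
    (hx : TpiP π r γ P x = x) : y ≤ x := by
  obtain ⟨s₀, hs₀⟩ := Finite.exists_min fun s => x s - y s
  have hmean : x s₀ - y s₀ ≤ ∑ a, π s₀ a * ∑ s', P s₀ a s' * (x s' - y s') :=
    le_sum_mul_of_mem_stdSimplex (hπ s₀) fun a => le_sum_mul_of_mem_stdSimplex (hP s₀ a) hs₀
  have hstep : γ * (x s₀ - y s₀) ≤ x s₀ - y s₀ := by
    have hsub := TpiP_sub_TpiP (π := π) (r := r) (γ := γ) (P := P) x y s₀
    rw [hx] at hsub
    linarith [hy s₀, mul_le_mul_of_nonneg_left hmean hγ0]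
  have hgap : 0 ≤ x s₀ - y s₀ := by nlinarith
  exact fun s => by linarith [hs₀ s]

lemma eq_of_TpiP_eq_of_TpiP_eq [Nonempty S] (hπ : IsPolicy π) (hP : IsKernel P)
    (hγ0 : 0 ≤ γ) (hγ1 : γ < 1) {x y : S → ℝ} (hx : TpiP π r γ P x = x)
    (hy : TpiP π r γ P y = y) : x = y :=
  le_antisymm (le_of_le_TpiP_of_TpiP_eq hπ hP hγ0 hγ1 hx.ge hy)
    (le_of_le_TpiP_of_TpiP_eq hπ hP hγ0 hγ1 hy.ge hx)

end Bellman

variable {US : Set (S → A → S → ℝ)}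

theorem SAFeasible.saTractable [Nonempty S] (hker : ∀ P ∈ US, IsKernel P) (hcpt : IsCompact US)
    (hF : SAFeasible US) : SATractable US := by
  intro π hπ r γ hγ0 hγ1 v hv uhat huhat μ hμ
  obtain ⟨Phat, hPhat, hfix⟩ := hF π hπ r γ hγ0 hγ1 uhat huhat
  have hvPhat : v Phat = uhat :=
    eq_of_TpiP_eq_of_TpiP_eq hπ (hker _ hPhat) hγ0 hγ1 (hv _ hPhat) hfix
  have huhat_le : ∀ P ∈ US, uhat ≤ v P := fun P hP =>
    le_of_le_TpiP_of_TpiP_eq hπ (hker P hP) hγ0 hγ1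
      (huhat.symm.le.trans (TpiHat_le_TpiP hcpt hπ hP uhat)) (hv P hP)
  have hmin : IsMinOn (fun P => ∑ s, μ s * v P s) US Phat := isMinOn_iff.2 fun P hP => by
    simp only [hvPhat]
    exact Finset.sum_le_sum fun s _ => mul_le_mul_of_nonneg_left (huhat_le P hP s) (hμ.1 s)
  rw [minOver_eq_of_isMinOn hPhat hmin, hvPhat]

theorem SSPsa.saFeasible (h : SSPsa US) : SAFeasible US := by
  intro π hπ r γ hγ0 hγ1 uhat huhat
  obtain ⟨Pstar, hPstar, hmin⟩ := h fun s a s' => r s a s' + γ * uhat s'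
  refine ⟨Pstar, hPstar, ?_⟩
  conv_rhs => rw [← huhat]
  funext s
  refine Finset.sum_congr rfl fun a _ => ?_
  rw [minOver_eq_of_isMinOn hPstar (isMinOn_iff.2 (hmin s a))]

theorem SATractable.ssPsa [Nonempty S] [Nonempty A] (hne : US.Nonempty) (hcpt : IsCompact US)
    (hT : SATractable US) : SSPsa US := by
  intro V
  let π : S → A → ℝ := fun _ _ => (Fintype.card A : ℝ)⁻¹
  let μ : S → ℝ := fun _ => (Fintype.card S : ℝ)⁻¹
  let row (P : S → A → S → ℝ) (s : S) (a : A) : ℝ := ∑ s', P s a s' * V s a s'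
  let m (s : S) (a : A) : ℝ := minOver US fun P => row P s a
  let v (P : S → A → S → ℝ) (s : S) : ℝ := ∑ a, π s a * row P s a
  have hπ : IsPolicy π := fun _ => const_inv_card_mem_stdSimplex
  have hμ : μ ∈ stdSimplex ℝ S := const_inv_card_mem_stdSimplex
  obtain ⟨Pstar, hPstar, hmin⟩ :=
    hcpt.exists_isMinOn hne (f := fun P => ∑ s, μ s * v P s) (by fun_prop)
  -- with `γ = 0` the Bellman operators ignore their argument
  have htract : ∑ s, μ s * v Pstar s = ∑ s, μ s * ∑ a, π s a * m s a :=
    (minOver_eq_of_isMinOn hPstar hmin).symm.trans <|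
      hT π hπ V 0 le_rfl one_pos v (fun P _ => by funext s; simp [TpiP, v, row]) _
        (by funext s; simp [TpiHat, m, row]) μ hμ
  have hle : ∀ s, m s ≤ row Pstar s := fun s a => minOver_le_s3 hcpt (by fun_prop) hPstar
  have hv : (fun s => ∑ a, π s a * m s a) = v Pstar :=
    eq_of_le_of_sum_mul_eq (fun _ => by positivity)
      (fun s => Finset.sum_le_sum fun a _ => mul_le_mul_of_nonneg_left (hle s a) ((hπ s).1 a))
      htract.symm
  have hrow : ∀ s, m s = row Pstar s := fun s =>
    eq_of_le_of_sum_mul_eq (fun _ => by positivity) (hle s) (congrFun hv s)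
  exact ⟨Pstar, hPstar, fun s a P hP =>
    (congrFun (hrow s) a).ge.trans (minOver_le_s3 hcpt (by fun_prop) hP)⟩

theorem stmt3 {S A : Type*} [Fintype S] [Fintype A] [Nonempty S] [Nonempty A]
    (US : Set (S → A → S → ℝ)) (hne : US.Nonempty) (hker : ∀ P ∈ US, IsKernel P)
    (hcpt : IsCompact US) :
    (SATractable US ↔ SAFeasible US) ∧ (SAFeasible US ↔ SSPsa US) :=
  ⟨⟨fun hT => (hT.ssPsa hne hcpt).saFeasible, (·.saTractable hker hcpt)⟩,
    ⟨fun hF => (hF.saTractable hker hcpt).ssPsa hne hcpt, (·.saFeasible)⟩⟩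

end RMDP
end

section
/- Let S and A be nonempty finite sets and let 𝒫 ⊆ Δ(S)^{S×A} be a convex and compact uncertainty set. Then 𝒫 satisfies the sa-SSP if and only if 𝒫 is sa-rectangular, i.e. 𝒫 equals the Cartesian product over (s,a) ∈ S×A of its state-action marginals 𝒫_{sa}. -/
open scoped BigOperators

namespace RMDP

variable {S A : Type*} [Fintype S] [Fintype A]

noncomputable def eSAS {S A : Type*} [DecidableEq S] [DecidableEq A]
    (s : S) (a : A) (s' : S) : S → A → S → ℝ :=
  Pi.single s (Pi.single a (Pi.single s' 1))

lemma decomp {S A : Type*} [Fintype S] [Fintype A] [DecidableEq S] [DecidableEq A]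
    (Q : S → A → S → ℝ) : Q = ∑ s, ∑ a, ∑ s', Q s a s' • eSAS s a s' := by
  funext t b t'
  simp [Finset.sum_apply, eSAS, Pi.single_apply, ite_apply, apply_ite, Finset.sum_ite_eq',
    mul_ite]

lemma clm_repr {S A : Type*} [Fintype S] [Fintype A] [DecidableEq S] [DecidableEq A]
    (f : (S → A → S → ℝ) →L[ℝ] ℝ) (Q : S → A → S → ℝ) :
    f Q = ∑ s, ∑ a, ∑ s', Q s a s' * f (eSAS s a s') := by
  conv_lhs => rw [decomp Q]
  simp [map_sum, smul_eq_mul]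

theorem stmt4 {S A : Type*} [Fintype S] [Fintype A] [Nonempty S] [Nonempty A]
    (US : Set (S → A → S → ℝ)) (hne : US.Nonempty) (hker : ∀ P ∈ US, IsKernel P)
    (hcpt : IsCompact US) (hconv : Convex ℝ US) :
    SSPsa US ↔
      US = {P : S → A → S → ℝ | IsKernel P ∧ ∀ (s : S) (a : A), ∃ Q ∈ US, Q s a = P s a} := by
  classical
  constructor
  · intro hssp
    ext P
    constructor
    · intro hP
      exact ⟨hker P hP, fun s a => ⟨P, hP, rfl⟩⟩
    · rintro ⟨hPk, hrows⟩
      by_contra hP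
      obtain ⟨f, u, hfu, hus⟩ :=
        geometric_hahn_banach_point_closed hconv hcpt.isClosed hP
      set V : S → A → S → ℝ := fun s a s' => f (eSAS s a s') with hV
      obtain ⟨Pstar, hPstar, hminV⟩ := hssp V
      have key : f Pstar ≤ f P := by
        rw [clm_repr f Pstar, clm_repr f P]
        refine Finset.sum_le_sum fun s _ => Finset.sum_le_sum fun a _ => ?_
        obtain ⟨Qsa, hQ, hQeq⟩ := hrows s a
        calc ∑ s', Pstar s a s' * f (eSAS s a s')
            ≤ ∑ s', Qsa s a s' * f (eSAS s a s') := hminV s a Qsa hQ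
          _ = ∑ s', P s a s' * f (eSAS s a s') := by rw [hQeq]
      have h1 := hus Pstar hPstar
      linarith
  · intro hrect V
    have hmin : ∀ s a, ∃ Q ∈ US, ∀ Q' ∈ US,
        (∑ s', Q s a s' * V s a s') ≤ ∑ s', Q' s a s' * V s a s' := by
      intro s a
      have hcont : Continuous fun Q : S → A → S → ℝ => ∑ s', Q s a s' * V s a s' := by
        refine continuous_finset_sum _ fun s' _ => ?_
        have : Continuous fun Q : S → A → S → ℝ => Q s a s' :=
          (continuous_apply s').comp ((continuous_apply a).comp (continuous_apply s))
        exact this.mul continuous_const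
      obtain ⟨Q, hQ, hm⟩ := hcpt.exists_isMinOn hne hcont.continuousOn
      exact ⟨Q, hQ, fun Q' h' => hm h'⟩
    choose Qf hQf hQmin using hmin
    refine ⟨fun s a => Qf s a s a, ?_, fun s a P hP => hQmin s a P hP⟩
    rw [hrect]
    exact ⟨fun s a => hker _ (hQf s a) s a, fun s a => ⟨Qf s a, hQf s a, rfl⟩⟩

end RMDP
end

section
/- Let S be a nonempty finite set, let γ ∈ [0,1), and let F : ℝ^S → ℝ^S be a γ-contraction for the sup norm that is order-preserving (v ≤ u componentwise implies F(v) ≤ F(u) componentwise), with unique fixed point w*. Then w* is the unique maximizer of the map v ↦ ∑_{s∈S} v_s over the set {v ∈ ℝ^S : v ≤ F(v) componentwise}. -/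
open scoped BigOperators

namespace RMDP

variable {S A : Type*} [Fintype S] [Fintype A]

theorem stmt6 {S : Type*} [Fintype S] [Nonempty S]
    (γ : ℝ) (hγ0 : 0 ≤ γ) (hγ1 : γ < 1)
    (F : (S → ℝ) → (S → ℝ))
    (hcontr : ∀ v u : S → ℝ, ‖F v - F u‖ ≤ γ * ‖v - u‖)
    (hmono : ∀ v u : S → ℝ, v ≤ u → F v ≤ F u)
    (w : S → ℝ) (hw : F w = w) :
    w ≤ F w ∧ (∀ v : S → ℝ, v ≤ F v → ∑ s, v s ≤ ∑ s, w s) ∧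
      ∀ v : S → ℝ, v ≤ F v → ∑ s, v s = ∑ s, w s → v = w := by
  have key : ∀ v : S → ℝ, v ≤ F v → v ≤ w := by
    intro v hv
    have hiter : ∀ n : ℕ, v ≤ F^[n] v := by
      intro n
      induction n with
      | zero => exact le_refl v
      | succ n ih =>
        calc v ≤ F v := hv
        _ ≤ F (F^[n] v) := hmono _ _ ih
        _ = F^[n+1] v := (Function.iterate_succ_apply' F n v).symm
    have hnorm : ∀ n : ℕ, ‖F^[n] v - w‖ ≤ γ ^ n * ‖v - w‖ := by
      intro n
      induction n with
      | zero => simp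
      | succ n ih =>
        calc ‖F^[n+1] v - w‖ = ‖F (F^[n] v) - F w‖ := by
              rw [Function.iterate_succ_apply', hw]
        _ ≤ γ * ‖F^[n] v - w‖ := hcontr _ _
        _ ≤ γ * (γ ^ n * ‖v - w‖) := by
              exact mul_le_mul_of_nonneg_left ih hγ0
        _ = γ ^ (n+1) * ‖v - w‖ := by ring
    intro s
    have hbound : ∀ n : ℕ, v s ≤ w s + γ ^ n * ‖v - w‖ := by
      intro n
      have h1 : v s ≤ F^[n] v s := hiter n s
      have h2 : F^[n] v s - w s ≤ ‖F^[n] v - w‖ := by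
        calc F^[n] v s - w s ≤ |F^[n] v s - w s| := le_abs_self _
        _ = ‖(F^[n] v - w) s‖ := by simp [Real.norm_eq_abs]
        _ ≤ ‖F^[n] v - w‖ := norm_le_pi_norm _ s
      linarith [hnorm n]
    have htend : Filter.Tendsto (fun n : ℕ => w s + γ ^ n * ‖v - w‖)
        Filter.atTop (nhds (w s + 0 * ‖v - w‖)) := by
      exact Filter.Tendsto.const_add _
        ((tendsto_pow_atTop_nhds_zero_of_lt_one hγ0 hγ1).mul_const _)
    have := ge_of_tendsto' htend hbound
    simpa using this
  refine ⟨le_of_eq hw.symm, fun v hv => Finset.sum_le_sum fun s _ => key v hv s, ?_⟩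
  intro v hv hsum
  have hle := key v hv
  funext s
  by_contra hne
  have hlt : v s < w s := lt_of_le_of_ne (hle s) hne
  have : ∑ s, v s < ∑ s, w s :=
    Finset.sum_lt_sum (fun i _ => hle i) ⟨s, Finset.mem_univ s, hlt⟩
  linarith

end RMDP
end

section
/- Let S and A be nonempty finite sets and let 𝒫 ⊆ Δ(S)^{S×A} be a compact (not necessarily convex) uncertainty set that is weakly s-tractable. Then for every next-state-independent r ∈ ℝ^{S×A×S}, every γ ∈ [0,1) and every μ ∈ Δ(S): (i) max over stationary policies π ∈ Δ(A)^S of min_{P∈𝒫} ∑_s μ_s v^{π,P}_s equals ∑_s μ_s u*_s; (ii) there exists a stationary policy π* with u^{π*} = u*, and every stationary policy π* satisfying u^{π*} = u* attains the maximum in (i). -/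
open scoped BigOperators

/-!
Robust policy evaluation `T^π` is monotone and shifts by `γ c` when its argument is shifted by
a constant `c`, so by Blackwell's argument it is a `γ`-contraction with a fixed point `u^π`.
Since `T^π u* ≤ T u* = u*`, monotonicity gives `u^π ≤ u*` for every policy. Compactness of `𝒫`
makes the inner objective of `T` continuous on the compact simplex, so a maximiser exists at each
state, and the policy choosing them satisfies `T^{π*} u* = u*`. Weak s-tractability translates
these statements about `u^π` into statements about `min_P ∑ μ v^{π,P}`.
-/

open NNReal

theorem ContractingWith.fixedPoint_le_of_map_le {α : Type*} [MetricSpace α] [Nonempty α]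
    [CompleteSpace α] [Preorder α] [ClosedIicTopology α] {K : ℝ≥0} {f : α → α}
    (hf : ContractingWith K f) (hmono : Monotone f) {x : α} (hx : f x ≤ x) :
    fixedPoint f hf ≤ x :=
  isClosed_Iic.mem_of_tendsto (hf.tendsto_iterate_fixedPoint x)
    (Filter.Eventually.of_forall fun n => hmono.antitone_iterate_of_map_le hx n.zero_le)

theorem lipschitzWith_of_monotone_of_add_const_le {ι : Type*} [Fintype ι]
    {T : (ι → ℝ) → ι → ℝ} {γ : ℝ≥0} (hmono : Monotone T)
    (hshift : ∀ v (c : ℝ), 0 ≤ c → T (v + fun _ => c) ≤ T v + fun _ => γ * c) :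
    LipschitzWith γ T := by
  have key : ∀ v w i, T v i ≤ T w i + γ * dist v w := by
    intro v w i
    refine (hmono fun j => ?_).trans (hshift w _ dist_nonneg) i
    have := (Real.sub_le_dist (v j) (w j)).trans (dist_le_pi_dist v w j)
    simp only [Pi.add_apply]
    linarith
  refine LipschitzWith.of_dist_le_mul fun v w => (dist_pi_le_iff (by positivity)).2 fun i => ?_
  rw [Real.dist_eq, abs_sub_le_iff]
  constructor
  · linarith [key v w i]
  · rw [dist_comm]
    linarith [key w v i]

namespace RMDP

section MinOver

variable {K : Type*} {K0 : Set K} {f g : K → ℝ}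

theorem minOver_le_minOver_add {ε : ℝ} (hne : K0.Nonempty) (hf : BddBelow (f '' K0))
    (h : ∀ P ∈ K0, f P ≤ g P + ε) : minOver K0 f ≤ minOver K0 g + ε := by
  rw [← sub_le_iff_le_add]
  refine le_csInf (hne.image g) (Set.forall_mem_image.2 fun P hP => ?_)
  exact sub_le_iff_le_add.2 ((csInf_le hf (Set.mem_image_of_mem f hP)).trans (h P hP))

theorem minOver_mono (hne : K0.Nonempty) (hf : BddBelow (f '' K0))
    (h : ∀ P ∈ K0, f P ≤ g P) : minOver K0 f ≤ minOver K0 g := by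
  simpa using minOver_le_minOver_add (ε := 0) hne hf (by simpa using h)

end MinOver

variable {S A : Type*} [Fintype S] [Fintype A] {US : Set (S → A → S → ℝ)}
  {π : S → A → ℝ} {r : S → A → S → ℝ} {γ : ℝ} {P : S → A → S → ℝ}

theorem monotone_tpiP (hP : IsKernel P) (hπ : IsPolicy π) (hγ : 0 ≤ γ) :
    Monotone (TpiP π r γ P) := by
  intro v w h s
  unfold TpiP
  gcongr with a _ s' _
  · exact (hπ s).1 a
  · exact (hP s a).1 s'
  · exact h s'

theorem tpiP_add_const (hP : IsKernel P) (hπ : IsPolicy π) (v : S → ℝ) (c : ℝ) :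
    TpiP π r γ P (v + fun _ => c) = TpiP π r γ P v + fun _ => γ * c := by
  funext s
  simp only [TpiP, Pi.add_apply, mul_add, Finset.sum_add_distrib, ← Finset.sum_mul,
    (hP s _).2, one_mul, (hπ s).2, add_assoc]

theorem bddBelow_tpiP_image (hcpt : IsCompact US) (v : S → ℝ) (s : S) :
    BddBelow ((fun P => TpiP π r γ P v s) '' US) :=
  hcpt.bddBelow_image (Continuous.continuousOn (by unfold TpiP; fun_prop))

section Tpi

variable (hne : US.Nonempty) (hcpt : IsCompact US) (hker : ∀ P ∈ US, IsKernel P)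
include hne hcpt hker

theorem monotone_tpi (hπ : IsPolicy π) (hγ : 0 ≤ γ) : Monotone (Tpi US π r γ) :=
  fun _ _ h s => minOver_mono hne (bddBelow_tpiP_image hcpt _ s) fun P hP =>
    monotone_tpiP (hker P hP) hπ hγ h s

theorem tpi_add_const_le (hπ : IsPolicy π) (v : S → ℝ) (c : ℝ) :
    Tpi US π r γ (v + fun _ => c) ≤ Tpi US π r γ v + fun _ => γ * c := fun s =>
  minOver_le_minOver_add hne (bddBelow_tpiP_image hcpt _ s) fun P hP =>
    (congrFun (tpiP_add_const (hker P hP) hπ v c) s).le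

theorem contractingWith_tpi (hπ : IsPolicy π) (hγ0 : 0 ≤ γ) (hγ1 : γ < 1) :
    ContractingWith ⟨γ, hγ0⟩ (Tpi US π r γ) :=
  ⟨hγ1, lipschitzWith_of_monotone_of_add_const_le (monotone_tpi hne hcpt hker hπ hγ0)
    fun v c _ => tpi_add_const_le hne hcpt hker hπ v c⟩

end Tpi

theorem continuous_robustBackup (hcpt : IsCompact US) (u : S → ℝ) (s : S) :
    Continuous fun p : A → ℝ =>
      minOver US (fun P => ∑ a, p a * ∑ s', P s a s' * (r s a s' + γ * u s')) :=
  hcpt.continuous_sInf (by fun_prop)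

theorem tpi_le_topt (hcpt : IsCompact US) (hπ : IsPolicy π) (u : S → ℝ) :
    Tpi US π r γ u ≤ Topt US r γ u := fun s =>
  le_csSup ((isCompact_stdSimplex ℝ A).bddAbove_image
    (continuous_robustBackup hcpt u s).continuousOn) ⟨π s, hπ s, rfl⟩

theorem exists_policy_tpi_eq_topt [Nonempty A] (hcpt : IsCompact US) (u : S → ℝ) :
    ∃ π, IsPolicy π ∧ Tpi US π r γ u = Topt US r γ u := by
  classical
  have h s := (isCompact_stdSimplex ℝ A).exists_sSup_image_eq
    ⟨_, single_mem_stdSimplex ℝ (Classical.arbitrary A)⟩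
    (continuous_robustBackup (r := r) (γ := γ) hcpt u s).continuousOn
  choose π hπ hmax using h
  exact ⟨π, hπ, funext fun s => (hmax s).symm⟩

theorem exists_fixedPoint_tpi_le (hne : US.Nonempty) (hcpt : IsCompact US)
    (hker : ∀ P ∈ US, IsKernel P) (hπ : IsPolicy π) (hγ0 : 0 ≤ γ) (hγ1 : γ < 1)
    {ustar : S → ℝ} (hustar : Topt US r γ ustar = ustar) :
    ∃ u, Tpi US π r γ u = u ∧ u ≤ ustar := by
  have hc := contractingWith_tpi (r := r) hne hcpt hker hπ hγ0 hγ1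
  exact ⟨_, hc.fixedPoint_isFixedPt, hc.fixedPoint_le_of_map_le
    (monotone_tpi hne hcpt hker hπ hγ0) ((tpi_le_topt hcpt hπ ustar).trans hustar.le)⟩

theorem stmt7_general {S A : Type*} [Fintype S] [Fintype A] [Nonempty A]
    (US : Set (S → A → S → ℝ)) (hne : US.Nonempty) (hker : ∀ P ∈ US, IsKernel P)
    (hcpt : IsCompact US) (hws : WeakSTractable US)
    (r : S → A → S → ℝ) (hr : NextStateIndep r) (γ : ℝ) (hγ0 : 0 ≤ γ) (hγ1 : γ < 1)
    (v : (S → A → ℝ) → (S → A → S → ℝ) → S → ℝ)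
    (hv : ∀ π : S → A → ℝ, IsPolicy π → ∀ P ∈ US, TpiP π r γ P (v π P) = v π P)
    (ustar : S → ℝ) (hustar : Topt US r γ ustar = ustar) :
    ∀ μ ∈ stdSimplex ℝ S,
      (maxOver {π : S → A → ℝ | IsPolicy π}
          (fun π => minOver US (fun P => ∑ s, μ s * v π P s)) = ∑ s, μ s * ustar s) ∧
      (∃ πstar : S → A → ℝ, IsPolicy πstar ∧ Tpi US πstar r γ ustar = ustar) ∧
      ∀ πstar : S → A → ℝ, IsPolicy πstar → Tpi US πstar r γ ustar = ustar →
        minOver US (fun P => ∑ s, μ s * v πstar P s) =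
          maxOver {π : S → A → ℝ | IsPolicy π}
            (fun π => minOver US (fun P => ∑ s, μ s * v π P s)) := by
  intro μ hμ
  have hvalue : ∀ π, IsPolicy π → ∀ u, Tpi US π r γ u = u →
      minOver US (fun P => ∑ s, μ s * v π P s) = ∑ s, μ s * u s := fun π hπ u hu =>
    hws π hπ r hr γ hγ0 hγ1 (v π) (hv π hπ) u hu μ hμ
  obtain ⟨πstar, hπstar, hoptimal⟩ := exists_policy_tpi_eq_topt (r := r) (γ := γ) hcpt ustar
  rw [hustar] at hoptimal
  have hmax : maxOver {π : S → A → ℝ | IsPolicy π}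
      (fun π => minOver US (fun P => ∑ s, μ s * v π P s)) = ∑ s, μ s * ustar s := by
    refine IsGreatest.csSup_eq ⟨⟨πstar, hπstar, hvalue πstar hπstar _ hoptimal⟩, ?_⟩
    rintro _ ⟨π, hπ : IsPolicy π, rfl⟩
    obtain ⟨u, hu, hle⟩ := exists_fixedPoint_tpi_le hne hcpt hker hπ hγ0 hγ1 hustar
    show minOver US _ ≤ _
    rw [hvalue π hπ u hu]
    exact Finset.sum_le_sum fun s _ => mul_le_mul_of_nonneg_left (hle s) (hμ.1 s)
  exact ⟨hmax, ⟨πstar, hπstar, hoptimal⟩, fun π hπ h => (hvalue π hπ _ h).trans hmax.symm⟩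

theorem stmt7 {S A : Type*} [Fintype S] [Fintype A] [Nonempty S] [Nonempty A]
    (US : Set (S → A → S → ℝ)) (hne : US.Nonempty) (hker : ∀ P ∈ US, IsKernel P)
    (hcpt : IsCompact US) (hws : WeakSTractable US)
    (r : S → A → S → ℝ) (hr : NextStateIndep r) (γ : ℝ) (hγ0 : 0 ≤ γ) (hγ1 : γ < 1)
    (v : (S → A → ℝ) → (S → A → S → ℝ) → S → ℝ)
    (hv : ∀ π : S → A → ℝ, IsPolicy π → ∀ P ∈ US, TpiP π r γ P (v π P) = v π P)
    (ustar : S → ℝ) (hustar : Topt US r γ ustar = ustar) :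
    ∀ μ ∈ stdSimplex ℝ S,
      (maxOver {π : S → A → ℝ | IsPolicy π}
          (fun π => minOver US (fun P => ∑ s, μ s * v π P s)) = ∑ s, μ s * ustar s) ∧
      (∃ πstar : S → A → ℝ, IsPolicy πstar ∧ Tpi US πstar r γ ustar = ustar) ∧
      ∀ πstar : S → A → ℝ, IsPolicy πstar → Tpi US πstar r γ ustar = ustar →
        minOver US (fun P => ∑ s, μ s * v πstar P s) =
          maxOver {π : S → A → ℝ | IsPolicy π}
            (fun π => minOver US (fun P => ∑ s, μ s * v π P s)) :=
  stmt7_general US hne hker hcpt hws r hr γ hγ0 hγ1 v hv ustar hustar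

end RMDP
end

section
/- Let S and A be nonempty finite sets and let 𝒫 ⊆ Δ(S)^{S×A} be a compact (not necessarily convex) uncertainty set that is weakly s-tractable. Then for every next-state-independent r ∈ ℝ^{S×A×S} and every γ ∈ [0,1), there exists a single stationary policy π* ∈ Δ(A)^S such that for every μ ∈ Δ(S), π* maximizes the map π ↦ min_{P∈𝒫} ∑_s μ_s v^{π,P}_s over all stationary policies π ∈ Δ(A)^S. -/
/-!
By weak s-tractability, the worst-case return of a policy `π` from `μ` is `μ · uπ`, where `uπ` is
the fixed point of the robust evaluation operator `Tpi`. Take the fixed point `u*` of the optimal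
operator `Topt` and a policy `π*` that is greedy for `u*`; it exists because
`p ↦ min_P (one-step lookahead)` is an infimum of linear maps, hence upper semicontinuous on the
compact simplex. Then `u*` is also the fixed point of `Tpi π*`. For any other `π`,
`Tpi π u* ≤ Topt u* = u*`, and since `Tpi π` is monotone and shrinks constant shifts by `γ`, its
fixed point satisfies `uπ ≤ u*`; averaging against `μ` gives the claim.
-/

open scoped BigOperators

namespace RMDP

variable {S A : Type*} [Fintype S] [Fintype A]

section MinMax

variable {K : Type*} {U : Set K} {f g : K → ℝ}

lemma minOver_le_s8 (hb : BddBelow (f '' U)) {x : K} (hx : x ∈ U) : minOver U f ≤ f x :=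
  csInf_le hb ⟨x, hx, rfl⟩

lemma le_maxOver (hb : BddAbove (f '' U)) {x : K} (hx : x ∈ U) : f x ≤ maxOver U f :=
  le_csSup hb ⟨x, hx, rfl⟩

lemma minOver_le_minOver_add_s8 (hU : U.Nonempty) (hb : BddBelow (f '' U)) {c : ℝ}
    (h : ∀ x ∈ U, f x ≤ g x + c) : minOver U f ≤ minOver U g + c := by
  have : minOver U f - c ≤ minOver U g := by
    refine le_csInf (hU.image g) ?_
    rintro _ ⟨x, hx, rfl⟩
    linarith [minOver_le_s8 hb hx, h x hx]
  linarith

lemma maxOver_le_maxOver_add (hU : U.Nonempty) (hb : BddAbove (g '' U)) {c : ℝ}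
    (h : ∀ x ∈ U, f x ≤ g x + c) : maxOver U f ≤ maxOver U g + c := by
  refine csSup_le (hU.image f) ?_
  rintro _ ⟨x, hx, rfl⟩
  linarith [le_maxOver hb hx, h x hx]

lemma bddBelow_image_of_abs_le {C : ℝ} (h : ∀ x ∈ U, |f x| ≤ C) : BddBelow (f '' U) := by
  refine ⟨-C, ?_⟩
  rintro _ ⟨x, hx, rfl⟩
  exact neg_le_of_abs_le (h x hx)

lemma abs_minOver_le (hU : U.Nonempty) {C : ℝ} (h : ∀ x ∈ U, |f x| ≤ C) :
    |minOver U f| ≤ C := by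
  obtain ⟨x, hx⟩ := hU
  refine abs_le.2 ⟨le_csInf ⟨f x, x, hx, rfl⟩ ?_, ?_⟩
  · rintro _ ⟨y, hy, rfl⟩
    exact neg_le_of_abs_le (h y hy)
  · exact (minOver_le_s8 (bddBelow_image_of_abs_le h) hx).trans (le_of_abs_le (h x hx))

end MinMax

section Simplex

variable {ι : Type*} [Fintype ι] {p : ι → ℝ}

lemma stdSimplex_nonempty [Nonempty ι] : (stdSimplex ℝ ι).Nonempty :=
  Set.nonempty_coe_sort.1 inferInstance

lemma sum_mul_le_sum_mul_add (hp : p ∈ stdSimplex ℝ ι) {x y : ι → ℝ} {c : ℝ}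
    (h : ∀ i, x i ≤ y i + c) : ∑ i, p i * x i ≤ ∑ i, p i * y i + c :=
  calc ∑ i, p i * x i ≤ ∑ i, p i * (y i + c) :=
        Finset.sum_le_sum fun i _ => mul_le_mul_of_nonneg_left (h i) (hp.1 i)
    _ = ∑ i, p i * y i + c := by
        simp only [mul_add, Finset.sum_add_distrib, ← Finset.sum_mul, hp.2, one_mul]

lemma abs_sum_mul_le (hp : p ∈ stdSimplex ℝ ι) {x : ι → ℝ} {C : ℝ} (h : ∀ i, |x i| ≤ C) :
    |∑ i, p i * x i| ≤ C :=
  calc |∑ i, p i * x i| ≤ ∑ i, p i * |x i| :=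
        (Finset.abs_sum_le_sum_abs _ _).trans_eq <| Finset.sum_congr rfl fun i _ => by
          rw [abs_mul, abs_of_nonneg (hp.1 i)]
    _ ≤ ∑ i, p i * 0 + C := sum_mul_le_sum_mul_add hp fun i => by simpa using h i
    _ = C := by simp

end Simplex

section ShiftContraction

variable {ι : Type*} [Fintype ι] {γ : ℝ} {F : (ι → ℝ) → ι → ℝ}

/-- Monotonicity and `F (w + c) ≤ F w + γ c` for constants `c`, in one condition. -/
def IsShiftContraction (γ : ℝ) (F : (ι → ℝ) → ι → ℝ) : Prop :=
  ∀ (v w : ι → ℝ) (c : ℝ), (∀ i, v i ≤ w i + c) → ∀ i, F v i ≤ F w i + γ * c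

lemma IsShiftContraction.lipschitzWith (hF : IsShiftContraction γ F) (hγ : 0 ≤ γ) :
    LipschitzWith ⟨γ, hγ⟩ F := by
  refine LipschitzWith.of_dist_le_mul fun v w => (dist_pi_le_iff (by positivity)).2 fun i => ?_
  have hvw : ∀ j, |v j - w j| ≤ dist v w := fun j => by
    simpa only [Real.dist_eq] using dist_le_pi_dist v w j
  have h₁ := hF v w (dist v w) (fun j => by linarith [(abs_le.1 (hvw j)).2]) i
  have h₂ := hF w v (dist v w) (fun j => by linarith [(abs_le.1 (hvw j)).1]) i
  change |F v i - F w i| ≤ γ * dist v w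
  rw [abs_sub_le_iff]
  exact ⟨by linarith, by linarith⟩

lemma IsShiftContraction.exists_fixedPoint (hF : IsShiftContraction γ F) (hγ0 : 0 ≤ γ)
    (hγ1 : γ < 1) : ∃ u, F u = u :=
  let hcon : ContractingWith ⟨γ, hγ0⟩ F := ⟨hγ1, hF.lipschitzWith hγ0⟩
  ⟨_, hcon.fixedPoint_isFixedPt⟩

lemma IsShiftContraction.le_of_fixedPoint (hF : IsShiftContraction γ F) (hγ1 : γ < 1)
    {u w : ι → ℝ} (hu : F u = u) (hw : ∀ i, F w i ≤ w i) : u ≤ w := by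
  intro i
  have : Nonempty ι := ⟨i⟩
  obtain ⟨j, hj⟩ := Finite.exists_max fun k => u k - w k
  -- `c` is the largest excess of `u` over `w`; applying `F` once shrinks it by the factor `γ`
  set c := u j - w j
  have hc : c ≤ γ * c := by
    have := hF u w c (fun k => by linarith [hj k]) j
    rw [hu] at this
    linarith [hw j]
  have : c ≤ 0 := by nlinarith
  linarith [hj i]

end ShiftContraction

noncomputable def lookahead (r : S → A → S → ℝ) (γ : ℝ) (P : S → A → S → ℝ) (v : S → ℝ)
    (s : S) (p : A → ℝ) : ℝ :=
  ∑ a, p a * ∑ s', P s a s' * (r s a s' + γ * v s')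

noncomputable def robustLookahead (US : Set (S → A → S → ℝ)) (r : S → A → S → ℝ) (γ : ℝ)
    (v : S → ℝ) (s : S) (p : A → ℝ) : ℝ :=
  minOver US fun P => lookahead r γ P v s p

lemma Tpi_apply (US : Set (S → A → S → ℝ)) (π : S → A → ℝ) (r : S → A → S → ℝ) (γ : ℝ)
    (v : S → ℝ) (s : S) : Tpi US π r γ v s = robustLookahead US r γ v s (π s) := rfl

lemma Topt_apply (US : Set (S → A → S → ℝ)) (r : S → A → S → ℝ) (γ : ℝ) (v : S → ℝ) (s : S) :
    Topt US r γ v s = maxOver (stdSimplex ℝ A) (robustLookahead US r γ v s) := rfl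

section Lookahead

variable {US : Set (S → A → S → ℝ)} {r : S → A → S → ℝ} {γ : ℝ} {P : S → A → S → ℝ}
  {v w : S → ℝ} {s : S} {p : A → ℝ}

lemma lookahead_le_add (hγ : 0 ≤ γ) (hP : IsKernel P) (hp : p ∈ stdSimplex ℝ A) {c : ℝ}
    (h : ∀ s', v s' ≤ w s' + c) : lookahead r γ P v s p ≤ lookahead r γ P w s p + γ * c :=
  sum_mul_le_sum_mul_add hp fun a => sum_mul_le_sum_mul_add (hP s a) fun s' => by
    nlinarith [h s']

lemma exists_abs_lookahead_le (r : S → A → S → ℝ) (γ : ℝ) (v : S → ℝ) (s : S) :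
    ∃ C, ∀ P p, IsKernel P → p ∈ stdSimplex ℝ A → |lookahead r γ P v s p| ≤ C := by
  obtain ⟨C, hC⟩ := Finite.bddAbove_range fun q : A × S => |r s q.1 q.2 + γ * v q.2|
  exact ⟨C, fun P p hP hp => abs_sum_mul_le hp fun a =>
    abs_sum_mul_le (hP s a) fun s' => hC ⟨(a, s'), rfl⟩⟩

lemma bddBelow_lookahead_image (hker : ∀ P ∈ US, IsKernel P) (hp : p ∈ stdSimplex ℝ A) :
    BddBelow ((fun P => lookahead r γ P v s p) '' US) := by
  obtain ⟨C, hC⟩ := exists_abs_lookahead_le r γ v s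
  exact bddBelow_image_of_abs_le fun P hP => hC P p (hker P hP) hp

lemma bddAbove_robustLookahead_image (hne : US.Nonempty) (hker : ∀ P ∈ US, IsKernel P) :
    BddAbove (robustLookahead US r γ v s '' stdSimplex ℝ A) := by
  obtain ⟨C, hC⟩ := exists_abs_lookahead_le r γ v s
  refine ⟨C, ?_⟩
  rintro _ ⟨p, hp, rfl⟩
  exact le_of_abs_le (abs_minOver_le hne fun P hP => hC P p (hker P hP) hp)

lemma robustLookahead_le_add (hne : US.Nonempty) (hker : ∀ P ∈ US, IsKernel P) (hγ : 0 ≤ γ)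
    (hp : p ∈ stdSimplex ℝ A) {c : ℝ} (h : ∀ s', v s' ≤ w s' + c) :
    robustLookahead US r γ v s p ≤ robustLookahead US r γ w s p + γ * c :=
  minOver_le_minOver_add_s8 hne (bddBelow_lookahead_image hker hp) fun P hP =>
    lookahead_le_add hγ (hker P hP) hp h

lemma upperSemicontinuousOn_robustLookahead (hker : ∀ P ∈ US, IsKernel P) :
    UpperSemicontinuousOn (robustLookahead US r γ v s) (stdSimplex ℝ A) := by
  have hinf : robustLookahead US r γ v s = fun p => ⨅ P : US, lookahead r γ P v s p := by
    funext p
    exact sInf_image'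
  rw [hinf]
  refine upperSemicontinuousOn_ciInf (fun p hp => ?_) fun P => ?_
  · simpa only [Set.image_eq_range] using bddBelow_lookahead_image (r := r) (γ := γ) hker hp
  · have : Continuous (lookahead r γ P v s) := by unfold lookahead; fun_prop
    exact this.upperSemicontinuous.upperSemicontinuousOn _

end Lookahead

section BellmanOperators

variable {US : Set (S → A → S → ℝ)} {r : S → A → S → ℝ} {γ : ℝ}

lemma Tpi_isShiftContraction (hne : US.Nonempty) (hker : ∀ P ∈ US, IsKernel P)
    {π : S → A → ℝ} (hπ : IsPolicy π) (hγ : 0 ≤ γ) : IsShiftContraction γ (Tpi US π r γ) :=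
  fun _ _ _ h s => robustLookahead_le_add hne hker hγ (hπ s) h

lemma Topt_isShiftContraction [Nonempty A] (hne : US.Nonempty) (hker : ∀ P ∈ US, IsKernel P)
    (hγ : 0 ≤ γ) : IsShiftContraction γ (Topt US r γ) :=
  fun _ _ _ h _ => maxOver_le_maxOver_add stdSimplex_nonempty
    (bddAbove_robustLookahead_image hne hker) fun _ hp => robustLookahead_le_add hne hker hγ hp h

lemma Tpi_le_Topt (hne : US.Nonempty) (hker : ∀ P ∈ US, IsKernel P) {π : S → A → ℝ}
    (hπ : IsPolicy π) (v : S → ℝ) (s : S) : Tpi US π r γ v s ≤ Topt US r γ v s :=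
  le_maxOver (bddAbove_robustLookahead_image hne hker) (hπ s)

lemma exists_greedy_policy [Nonempty A] (hker : ∀ P ∈ US, IsKernel P) (u : S → ℝ) :
    ∃ π, IsPolicy π ∧ Tpi US π r γ u = Topt US r γ u := by
  have hmax : ∀ s, ∃ p ∈ stdSimplex ℝ A,
      IsMaxOn (robustLookahead US r γ u s) (stdSimplex ℝ A) p := fun s =>
    (upperSemicontinuousOn_robustLookahead hker).exists_isMaxOn
      stdSimplex_nonempty (isCompact_stdSimplex ℝ A)
  choose π hπ hπmax using hmax
  refine ⟨π, hπ, funext fun s => ?_⟩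
  rw [Tpi_apply, Topt_apply, maxOver, eq_comm]
  refine IsGreatest.csSup_eq ⟨⟨π s, hπ s, rfl⟩, ?_⟩
  rintro _ ⟨p, hp, rfl⟩
  exact hπmax s hp

end BellmanOperators

theorem stmt8_general {S A : Type*} [Fintype S] [Fintype A] [Nonempty A]
    (US : Set (S → A → S → ℝ)) (hne : US.Nonempty) (hker : ∀ P ∈ US, IsKernel P)
    (hws : WeakSTractable US)
    (r : S → A → S → ℝ) (hr : NextStateIndep r) (γ : ℝ) (hγ0 : 0 ≤ γ) (hγ1 : γ < 1)
    (v : (S → A → ℝ) → (S → A → S → ℝ) → S → ℝ)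
    (hv : ∀ π : S → A → ℝ, IsPolicy π → ∀ P ∈ US, TpiP π r γ P (v π P) = v π P) :
    ∃ πstar : S → A → ℝ, IsPolicy πstar ∧
      ∀ μ ∈ stdSimplex ℝ S, ∀ π : S → A → ℝ, IsPolicy π →
        minOver US (fun P => ∑ s, μ s * v π P s) ≤
          minOver US (fun P => ∑ s, μ s * v πstar P s) := by
  obtain ⟨ustar, hustar⟩ :=
    (Topt_isShiftContraction (r := r) hne hker hγ0).exists_fixedPoint hγ0 hγ1
  obtain ⟨πstar, hπstar, hgreedy⟩ := exists_greedy_policy (r := r) (γ := γ) hker ustar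
  refine ⟨πstar, hπstar, fun μ hμ π hπ => ?_⟩
  have hTpi := Tpi_isShiftContraction (r := r) hne hker hπ hγ0
  obtain ⟨u, hu⟩ := hTpi.exists_fixedPoint hγ0 hγ1
  have hle : u ≤ ustar := hTpi.le_of_fixedPoint hγ1 hu fun s =>
    (Tpi_le_Topt hne hker hπ ustar s).trans_eq (congrFun hustar s)
  rw [hws π hπ r hr γ hγ0 hγ1 (v π) (hv π hπ) u hu μ hμ,
    hws πstar hπstar r hr γ hγ0 hγ1 (v πstar) (hv πstar hπstar) ustar (hgreedy.trans hustar) μ hμ]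
  exact Finset.sum_le_sum fun s _ => mul_le_mul_of_nonneg_left (hle s) (hμ.1 s)

theorem stmt8 {S A : Type*} [Fintype S] [Fintype A] [Nonempty S] [Nonempty A]
    (US : Set (S → A → S → ℝ)) (hne : US.Nonempty) (hker : ∀ P ∈ US, IsKernel P)
    (hcpt : IsCompact US) (hws : WeakSTractable US)
    (r : S → A → S → ℝ) (hr : NextStateIndep r) (γ : ℝ) (hγ0 : 0 ≤ γ) (hγ1 : γ < 1)
    (v : (S → A → ℝ) → (S → A → S → ℝ) → S → ℝ)
    (hv : ∀ π : S → A → ℝ, IsPolicy π → ∀ P ∈ US, TpiP π r γ P (v π P) = v π P) :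
    ∃ πstar : S → A → ℝ, IsPolicy πstar ∧
      ∀ μ ∈ stdSimplex ℝ S, ∀ π : S → A → ℝ, IsPolicy π →
        minOver US (fun P => ∑ s, μ s * v π P s) ≤
          minOver US (fun P => ∑ s, μ s * v πstar P s) :=
  stmt8_general US hne hker hws r hr γ hγ0 hγ1 v hv

end RMDP
end

section
/- Let S and A be nonempty finite sets, let 𝒫 ⊆ Δ(S)^{S×A} be a compact uncertainty set, and fix rewards r ∈ ℝ^{S×A×S}, a discount factor γ ∈ [0,1) and μ ∈ Δ(S). Assume strong duality over stationary policies: max over stationary π ∈ Δ(A)^S of min_{P∈𝒫} ∑_s μ_s v^{π,P}_s equals min_{P∈𝒫} of max over stationary π ∈ Δ(A)^S of ∑_s μ_s v^{π,P}_s. Then the supremum over all history-dependent policies π ∈ Π_H of inf_{P∈𝒫} ∑_s μ_s v^{π,P}_s equals the maximum over stationary policies π ∈ Δ(A)^S of min_{P∈𝒫} ∑_s μ_s v^{π,P}_s. -/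
open scoped BigOperators

namespace RMDP

variable {S A : Type*} [Fintype S] [Fintype A]

lemma wavg_le_const {ι : Type*} [Fintype ι] {p : ι → ℝ} (hp : p ∈ stdSimplex ℝ ι)
    {x : ι → ℝ} {c : ℝ} (hx : ∀ i, x i ≤ c) : ∑ i, p i * x i ≤ c := by
  calc ∑ i, p i * x i ≤ ∑ i, p i * c :=
        Finset.sum_le_sum fun i _ => mul_le_mul_of_nonneg_left (hx i) (hp.1 i)
    _ = c := by rw [← Finset.sum_mul, hp.2, one_mul]

lemma abs_wavg_le {ι : Type*} [Fintype ι] {p : ι → ℝ} (hp : p ∈ stdSimplex ℝ ι)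
    {x : ι → ℝ} {c : ℝ} (hx : ∀ i, |x i| ≤ c) : |∑ i, p i * x i| ≤ c := by
  calc |∑ i, p i * x i| ≤ ∑ i, |p i * x i| := Finset.abs_sum_le_sum_abs _ _
    _ = ∑ i, p i * |x i| := Finset.sum_congr rfl fun i _ => by
        rw [abs_mul, abs_of_nonneg (hp.1 i)]
    _ ≤ c := wavg_le_const hp hx

lemma wavg_mono {ι : Type*} [Fintype ι] {p : ι → ℝ} (hp : p ∈ stdSimplex ℝ ι)
    {x y : ι → ℝ} (hxy : ∀ i, x i ≤ y i) : ∑ i, p i * x i ≤ ∑ i, p i * y i :=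
  Finset.sum_le_sum fun i _ => mul_le_mul_of_nonneg_left (hxy i) (hp.1 i)

lemma tpip_fixed_unique [Nonempty S] {π : S → A → ℝ} (hπ : IsPolicy π)
    {r : S → A → S → ℝ} {γ : ℝ} (hγ0 : 0 ≤ γ) (hγ1 : γ < 1)
    {P : S → A → S → ℝ} (hP : IsKernel P) {u w : S → ℝ}
    (hu : TpiP π r γ P u = u) (hw : TpiP π r γ P w = w) : u = w := by
  set M := Finset.univ.sup' Finset.univ_nonempty (fun s => |u s - w s|) with hMdef
  have hle : ∀ s : S, |u s - w s| ≤ M := fun s => Finset.le_sup' (fun s => |u s - w s|) (Finset.mem_univ s)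
  have key : ∀ s : S, |u s - w s| ≤ γ * M := by
    intro s
    have h1 : u s - w s = ∑ a, π s a * (∑ s', P s a s' * (γ * (u s' - w s'))) := by
      conv_lhs => rw [← hu, ← hw]
      simp only [TpiP]
      rw [← Finset.sum_sub_distrib]
      refine Finset.sum_congr rfl fun a _ => ?_
      rw [← mul_sub, ← Finset.sum_sub_distrib]
      congr 1
      refine Finset.sum_congr rfl fun s' _ => ?_
      ring
    rw [h1]
    refine abs_wavg_le (hπ s) fun a => ?_
    refine abs_wavg_le (hP s a) fun s' => ?_
    rw [abs_mul, abs_of_nonneg hγ0]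
    exact mul_le_mul_of_nonneg_left (hle s') hγ0
  have hM0 : 0 ≤ M := le_trans (abs_nonneg _) (hle (Classical.arbitrary S))
  have hMle : M ≤ γ * M := Finset.sup'_le _ _ fun s _ => key s
  have hM00 : M ≤ 0 := by nlinarith
  funext s
  have h2 : |u s - w s| = 0 := le_antisymm ((hle s).trans hM00) (abs_nonneg _)
  have := abs_eq_zero.mp h2
  linarith [sub_eq_zero.mp this]

lemma tpip_fixed_bound [Nonempty S] {π : S → A → ℝ} (hπ : IsPolicy π)
    {r : S → A → S → ℝ} {γ : ℝ} (hγ0 : 0 ≤ γ) (hγ1 : γ < 1)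
    {P : S → A → S → ℝ} (hP : IsKernel P) {u : S → ℝ}
    (hu : TpiP π r γ P u = u) {B : ℝ} (hB : ∀ s a s', |r s a s'| ≤ B) :
    ∀ s, |u s| ≤ B / (1 - γ) := by
  set M := Finset.univ.sup' Finset.univ_nonempty (fun s => |u s|) with hMdef
  have hle : ∀ s : S, |u s| ≤ M := fun s => Finset.le_sup' (fun s => |u s|) (Finset.mem_univ s)
  have key : ∀ s : S, |u s| ≤ B + γ * M := by
    intro s
    have h1 : u s = ∑ a, π s a * (∑ s', P s a s' * (r s a s' + γ * u s')) := by
      conv_lhs => rw [← hu]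
      rfl
    rw [h1]
    refine abs_wavg_le (hπ s) fun a => ?_
    refine abs_wavg_le (hP s a) fun s' => ?_
    refine (abs_add_le _ _).trans ?_
    have : |γ * u s'| ≤ γ * M := by
      rw [abs_mul, abs_of_nonneg hγ0]
      exact mul_le_mul_of_nonneg_left (hle s') hγ0
    linarith [hB s a s']
  have hMle : M ≤ B + γ * M := Finset.sup'_le _ _ fun s _ => key s
  have h1γ : 0 < 1 - γ := by linarith
  intro s
  refine (hle s).trans ?_
  rw [le_div_iff₀ h1γ]
  nlinarith

lemma abs_sup'_sub_sup'_le {ι : Type*} [Fintype ι] [Nonempty ι] {f g : ι → ℝ} {c : ℝ}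
    (hc : ∀ i, |f i - g i| ≤ c) :
    |Finset.univ.sup' Finset.univ_nonempty f - Finset.univ.sup' Finset.univ_nonempty g| ≤ c := by
  rw [abs_sub_le_iff]
  constructor
  · rw [sub_le_iff_le_add]
    refine Finset.sup'_le _ _ fun i _ => ?_
    have := (abs_sub_le_iff.mp (hc i)).1
    have h2 : g i ≤ Finset.univ.sup' Finset.univ_nonempty g := Finset.le_sup' _ (Finset.mem_univ i)
    linarith
  · rw [sub_le_iff_le_add]
    refine Finset.sup'_le _ _ fun i _ => ?_
    have := (abs_sub_le_iff.mp (hc i)).2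
    have h2 : f i ≤ Finset.univ.sup' Finset.univ_nonempty f := Finset.le_sup' _ (Finset.mem_univ i)
    linarith

lemma exists_opt_fixed [Nonempty S] [Nonempty A] (r : S → A → S → ℝ) {γ : ℝ}
    (hγ0 : 0 ≤ γ) (hγ1 : γ < 1) (P : S → A → S → ℝ) (hP : IsKernel P) :
    ∃ u : S → ℝ, ∀ s, Finset.univ.sup' Finset.univ_nonempty
      (fun a => ∑ s', P s a s' * (r s a s' + γ * u s')) = u s := by
  set f : (S → ℝ) → (S → ℝ) := fun v s => Finset.univ.sup' Finset.univ_nonempty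
      (fun a => ∑ s', P s a s' * (r s a s' + γ * v s')) with hfdef
  have hf : ∀ v w : S → ℝ, dist (f v) (f w) ≤ γ * dist v w := by
    intro v w
    rw [dist_pi_le_iff (mul_nonneg hγ0 dist_nonneg)]
    intro s
    rw [Real.dist_eq]
    refine abs_sup'_sub_sup'_le fun a => ?_
    have h1 : (∑ s', P s a s' * (r s a s' + γ * v s')) - ∑ s', P s a s' * (r s a s' + γ * w s')
        = ∑ s', P s a s' * (γ * (v s' - w s')) := by
      rw [← Finset.sum_sub_distrib]
      refine Finset.sum_congr rfl fun s' _ => ?_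
      ring
    rw [h1]
    refine abs_wavg_le (hP s a) fun s' => ?_
    rw [abs_mul, abs_of_nonneg hγ0]
    refine mul_le_mul_of_nonneg_left ?_ hγ0
    rw [← Real.dist_eq]
    exact dist_le_pi_dist v w s'
  have lip : LipschitzWith γ.toNNReal f :=
    LipschitzWith.of_dist_le_mul (by
      intro x y
      rw [Real.coe_toNNReal γ hγ0]
      exact hf x y)
  have hc : ContractingWith γ.toNNReal f := ⟨Real.toNNReal_lt_one.2 hγ1, lip⟩
  exact ⟨ContractingWith.fixedPoint f hc, fun s => congrFun hc.fixedPoint_isFixedPt s⟩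

lemma exists_greedy [Nonempty A] {r : S → A → S → ℝ} {γ : ℝ}
    {P : S → A → S → ℝ} {u : S → ℝ}
    (hu : ∀ s, Finset.univ.sup' Finset.univ_nonempty
      (fun a => ∑ s', P s a s' * (r s a s' + γ * u s')) = u s) :
    ∃ π : S → A → ℝ, IsPolicy π ∧ TpiP π r γ P u = u := by
  classical
  choose a0 _ ha0 using fun s => Finset.exists_mem_eq_sup' Finset.univ_nonempty
    (fun a => ∑ s', P s a s' * (r s a s' + γ * u s'))
  refine ⟨fun s a => if a = a0 s then 1 else 0, ?_, ?_⟩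
  · intro s
    constructor
    · intro a; dsimp only; split <;> norm_num
    · simp
  · funext s
    simp only [TpiP]
    have : ∀ a, (if a = a0 s then (1:ℝ) else 0) * ∑ s', P s a s' * (r s a s' + γ * u s')
        = if a = a0 s then ∑ s', P s a s' * (r s a s' + γ * u s') else 0 := by
      intro a; split <;> simp
    rw [Finset.sum_congr rfl fun a _ => this a, Finset.sum_ite_eq']
    simp only [Finset.mem_univ, if_true]
    rw [← ha0 s, hu s]

lemma pull_sum {ι : Type*} [Fintype ι] (c : ℝ) (q f : ι → ℝ) :
    c * ∑ i, q i * f i = ∑ i, q i * (c * f i) := by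
  rw [Finset.mul_sum]
  exact Finset.sum_congr rfl fun i _ => by ring

noncomputable def expV (π : List (S × A) → S → A → ℝ) (P : S → A → S → ℝ)
    (u : S → ℝ) : ℕ → List (S × A) → S → ℝ
  | 0, _, s => u s
  | (t + 1), h, s =>
      ∑ a, π h s a * ∑ s', P s a s' * expV π P u t (h ++ [(s, a)]) s'

lemma expRHH_abs_le {π : List (S × A) → S → A → ℝ} (hπ : IsHPolicy π)
    {P : S → A → S → ℝ} (hP : IsKernel P) {r : S → A → S → ℝ} {B : ℝ}
    (hB : ∀ s a s', |r s a s'| ≤ B) :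
    ∀ (t : ℕ) (h : List (S × A)) (s : S), |expRHH π (fun _ => P) r t h s| ≤ B := by
  intro t
  induction t with
  | zero =>
    intro h s
    exact abs_wavg_le (hπ h s) fun a => abs_wavg_le (hP s a) fun s' => hB s a s'
  | succ t ih =>
    intro h s
    exact abs_wavg_le (hπ h s) fun a => abs_wavg_le (hP s a) fun s' => ih _ _

lemma expV_abs_le {π : List (S × A) → S → A → ℝ} (hπ : IsHPolicy π)
    {P : S → A → S → ℝ} (hP : IsKernel P) {u : S → ℝ} {M : ℝ}
    (hM : ∀ s, |u s| ≤ M) :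
    ∀ (t : ℕ) (h : List (S × A)) (s : S), |expV π P u t h s| ≤ M := by
  intro t
  induction t with
  | zero => intro h s; exact hM s
  | succ t ih =>
    intro h s
    exact abs_wavg_le (hπ h s) fun a => abs_wavg_le (hP s a) fun s' => ih _ _

lemma partial_le_of_bellman {π : List (S × A) → S → A → ℝ} (hπ : IsHPolicy π)
    {P : S → A → S → ℝ} (hP : IsKernel P) {r : S → A → S → ℝ} {γ : ℝ}
    (hγ0 : 0 ≤ γ) {u : S → ℝ}
    (hu : ∀ s a, ∑ s', P s a s' * (r s a s' + γ * u s') ≤ u s) :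
    ∀ (n : ℕ) (h : List (S × A)) (s : S),
      (∑ t ∈ Finset.range n, γ ^ t * expRHH π (fun _ => P) r t h s)
        + γ ^ n * expV π P u n h s ≤ u s := by
  intro n
  induction n with
  | zero => intro h s; simp [expV]
  | succ n ih =>
    intro h s
    have key : (∑ t ∈ Finset.range (n + 1), γ ^ t * expRHH π (fun _ => P) r t h s)
        + γ ^ (n + 1) * expV π P u (n + 1) h s
        = ∑ a, π h s a * ∑ s', P s a s' * (r s a s' +
            γ * ((∑ t ∈ Finset.range n, γ ^ t * expRHH π (fun _ => P) r t (h ++ [(s, a)]) s')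
              + γ ^ n * expV π P u n (h ++ [(s, a)]) s')) := by
      rw [Finset.sum_range_succ']
      have hA : ∑ t ∈ Finset.range n, γ ^ (t + 1) * expRHH π (fun _ => P) r (t + 1) h s
          = ∑ a, π h s a * ∑ s', P s a s' *
              (γ * ∑ t ∈ Finset.range n, γ ^ t * expRHH π (fun _ => P) r t (h ++ [(s, a)]) s') := by
        calc ∑ t ∈ Finset.range n, γ ^ (t + 1) * expRHH π (fun _ => P) r (t + 1) h s
            = ∑ t ∈ Finset.range n, ∑ a, π h s a * ∑ s', P s a s' *
                (γ ^ (t + 1) * expRHH π (fun _ => P) r t (h ++ [(s, a)]) s') := by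
              refine Finset.sum_congr rfl fun t _ => ?_
              simp only [expRHH]
              rw [pull_sum]
              refine Finset.sum_congr rfl fun a _ => ?_
              rw [pull_sum]
          _ = ∑ a, ∑ t ∈ Finset.range n, π h s a * ∑ s', P s a s' *
                (γ ^ (t + 1) * expRHH π (fun _ => P) r t (h ++ [(s, a)]) s') := Finset.sum_comm
          _ = _ := by
              refine Finset.sum_congr rfl fun a _ => ?_
              rw [← Finset.mul_sum]
              congr 1
              rw [Finset.sum_comm]
              refine Finset.sum_congr rfl fun s' _ => ?_
              rw [← Finset.mul_sum]
              congr 1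
              rw [Finset.mul_sum]
              refine Finset.sum_congr rfl fun t _ => ?_
              ring
      have hC : γ ^ (n + 1) * expV π P u (n + 1) h s
          = ∑ a, π h s a * ∑ s', P s a s' *
              (γ * (γ ^ n * expV π P u n (h ++ [(s, a)]) s')) := by
        simp only [expV]
        rw [pull_sum]
        refine Finset.sum_congr rfl fun a _ => ?_
        rw [pull_sum]
        congr 1
        exact Finset.sum_congr rfl fun s' _ => by ring
      have hRHS : ∑ a, π h s a * ∑ s', P s a s' * (r s a s' +
            γ * ((∑ t ∈ Finset.range n, γ ^ t * expRHH π (fun _ => P) r t (h ++ [(s, a)]) s')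
              + γ ^ n * expV π P u n (h ++ [(s, a)]) s'))
          = (∑ a, π h s a * ∑ s', P s a s' * r s a s')
            + ((∑ a, π h s a * ∑ s', P s a s' *
                (γ * ∑ t ∈ Finset.range n, γ ^ t * expRHH π (fun _ => P) r t (h ++ [(s, a)]) s'))
              + ∑ a, π h s a * ∑ s', P s a s' *
                (γ * (γ ^ n * expV π P u n (h ++ [(s, a)]) s'))) := by
        rw [← Finset.sum_add_distrib, ← Finset.sum_add_distrib]
        refine Finset.sum_congr rfl fun a _ => ?_
        rw [← mul_add, ← mul_add, ← Finset.sum_add_distrib, ← Finset.sum_add_distrib]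
        congr 1
        refine Finset.sum_congr rfl fun s' _ => ?_
        ring
      rw [hRHS, ← hA, ← hC]
      have h0 : expRHH π (fun _ => P) r 0 h s = ∑ a, π h s a * ∑ s', P s a s' * r s a s' := rfl
      rw [h0]
      ring
    rw [key]
    refine wavg_le_const (hπ h s) fun a => ?_
    refine le_trans ?_ (hu s a)
    refine Finset.sum_le_sum fun s' _ => ?_
    refine mul_le_mul_of_nonneg_left ?_ ((hP s a).1 s')
    have h3 := ih (h ++ [(s, a)]) s'
    nlinarith [h3]

lemma summable_expRHH {π : List (S × A) → S → A → ℝ} (hπ : IsHPolicy π)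
    {P : S → A → S → ℝ} (hP : IsKernel P) {r : S → A → S → ℝ} {γ : ℝ}
    (hγ0 : 0 ≤ γ) (hγ1 : γ < 1) {B : ℝ} (hB : ∀ s a s', |r s a s'| ≤ B)
    (h : List (S × A)) (s : S) :
    Summable (fun t : ℕ => γ ^ t * expRHH π (fun _ => P) r t h s) := by
  refine Summable.of_abs ?_
  refine Summable.of_nonneg_of_le (fun t => abs_nonneg _) (fun t => ?_)
    ((summable_geometric_of_lt_one hγ0 hγ1).mul_left B)
  rw [abs_mul, abs_pow, abs_of_nonneg hγ0]
  calc γ ^ t * |expRHH π (fun _ => P) r t h s| ≤ γ ^ t * B :=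
        mul_le_mul_of_nonneg_left (expRHH_abs_le hπ hP hB t h s) (pow_nonneg hγ0 t)
    _ = B * γ ^ t := by ring

lemma vHH_le_of_bellman [Nonempty S] {π : List (S × A) → S → A → ℝ} (hπ : IsHPolicy π)
    {P : S → A → S → ℝ} (hP : IsKernel P) {r : S → A → S → ℝ} {γ : ℝ}
    (hγ0 : 0 ≤ γ) (hγ1 : γ < 1) {B : ℝ} (hB : ∀ s a s', |r s a s'| ≤ B)
    {u : S → ℝ} (hu : ∀ s a, ∑ s', P s a s' * (r s a s' + γ * u s') ≤ u s) (s : S) :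
    vHH π (fun _ => P) r γ s ≤ u s := by
  set M := Finset.univ.sup' Finset.univ_nonempty (fun s => |u s|) with hMdef
  have hM : ∀ s : S, |u s| ≤ M := fun s => Finset.le_sup' (fun s => |u s|) (Finset.mem_univ s)
  have hpart : ∀ n : ℕ, (∑ t ∈ Finset.range n, γ ^ t * expRHH π (fun _ => P) r t [] s)
      ≤ u s + γ ^ n * M := by
    intro n
    have h1 := partial_le_of_bellman hπ hP hγ0 hu n [] s
    have h2 : |expV π P u n [] s| ≤ M := expV_abs_le hπ hP hM n [] s
    have h3 : -(γ ^ n * M) ≤ γ ^ n * expV π P u n [] s := by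
      have := neg_abs_le (expV π P u n [] s)
      have h4 := mul_le_mul_of_nonneg_left (h2) (pow_nonneg hγ0 n)
      nlinarith [pow_nonneg hγ0 n, abs_nonneg (expV π P u n [] s)]
    linarith
  have hsum := summable_expRHH hπ hP hγ0 hγ1 hB [] s
  have htend := hsum.hasSum.tendsto_sum_nat
  have htend2 : Filter.Tendsto (fun n : ℕ => u s + γ ^ n * M) Filter.atTop (nhds (u s + 0 * M)) := by
    refine Filter.Tendsto.add tendsto_const_nhds ?_
    exact (tendsto_pow_atTop_nhds_zero_of_lt_one hγ0 hγ1).mul_const M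
  have := le_of_tendsto_of_tendsto' htend htend2 hpart
  simpa [vHH] using this

lemma vHH_abs_le {π : List (S × A) → S → A → ℝ} (hπ : IsHPolicy π)
    {P : S → A → S → ℝ} (hP : IsKernel P) {r : S → A → S → ℝ} {γ : ℝ}
    (hγ0 : 0 ≤ γ) (hγ1 : γ < 1) {B : ℝ} (hB : ∀ s a s', |r s a s'| ≤ B) (s : S) :
    |vHH π (fun _ => P) r γ s| ≤ B / (1 - γ) := by
  have hsum := summable_expRHH hπ hP hγ0 hγ1 hB [] s
  have habs : Summable (fun t : ℕ => |γ ^ t * expRHH π (fun _ => P) r t [] s|) := by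
    refine Summable.of_nonneg_of_le (fun t => abs_nonneg _) (fun t => ?_)
      ((summable_geometric_of_lt_one hγ0 hγ1).mul_left B)
    rw [abs_mul, abs_pow, abs_of_nonneg hγ0]
    calc γ ^ t * |expRHH π (fun _ => P) r t [] s| ≤ γ ^ t * B :=
          mul_le_mul_of_nonneg_left (expRHH_abs_le hπ hP hB t [] s) (pow_nonneg hγ0 t)
      _ = B * γ ^ t := by ring
  calc |vHH π (fun _ => P) r γ s| ≤ ∑' t : ℕ, |γ ^ t * expRHH π (fun _ => P) r t [] s| := by
        have h := norm_tsum_le_tsum_norm (f := fun t : ℕ => γ ^ t * expRHH π (fun _ => P) r t [] s)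
          (by simpa only [Real.norm_eq_abs] using habs)
        simpa only [Real.norm_eq_abs, vHH] using h
    _ ≤ ∑' t : ℕ, B * γ ^ t := by
        refine Summable.tsum_le_tsum (fun t => ?_) habs ((summable_geometric_of_lt_one hγ0 hγ1).mul_left B)
        rw [abs_mul, abs_pow, abs_of_nonneg hγ0]
        calc γ ^ t * |expRHH π (fun _ => P) r t [] s| ≤ γ ^ t * B :=
              mul_le_mul_of_nonneg_left (expRHH_abs_le hπ hP hB t [] s) (pow_nonneg hγ0 t)
          _ = B * γ ^ t := by ring
    _ = B * (1 - γ)⁻¹ := by rw [tsum_mul_left, tsum_geometric_of_lt_one hγ0 hγ1]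
    _ = B / (1 - γ) := by rw [div_eq_mul_inv]

noncomputable def eStat (π : S → A → ℝ) (P : S → A → S → ℝ) (r : S → A → S → ℝ) :
    ℕ → S → ℝ
  | 0 => fun s => ∑ a, π s a * ∑ s', P s a s' * r s a s'
  | (t + 1) => fun s => ∑ a, π s a * ∑ s', P s a s' * eStat π P r t s'

lemma expRHH_stat (π : S → A → ℝ) (P : S → A → S → ℝ) (r : S → A → S → ℝ) :
    ∀ (t : ℕ) (h : List (S × A)) (s : S),
      expRHH (fun _ => π) (fun _ => P) r t h s = eStat π P r t s := by
  intro t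
  induction t with
  | zero => intro h s; rfl
  | succ t ih =>
    intro h s
    simp only [expRHH, eStat]
    exact Finset.sum_congr rfl fun a _ => by
      congr 1
      exact Finset.sum_congr rfl fun s' _ => by rw [ih]

lemma eStat_abs_le {π : S → A → ℝ} (hπ : IsPolicy π)
    {P : S → A → S → ℝ} (hP : IsKernel P) {r : S → A → S → ℝ} {B : ℝ}
    (hB : ∀ s a s', |r s a s'| ≤ B) :
    ∀ (t : ℕ) (s : S), |eStat π P r t s| ≤ B := by
  intro t
  induction t with
  | zero => intro s; exact abs_wavg_le (hπ s) fun a => abs_wavg_le (hP s a) fun s' => hB s a s'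
  | succ t ih => intro s; exact abs_wavg_le (hπ s) fun a => abs_wavg_le (hP s a) fun s' => ih s'

lemma summable_eStat {π : S → A → ℝ} (hπ : IsPolicy π)
    {P : S → A → S → ℝ} (hP : IsKernel P) {r : S → A → S → ℝ} {γ : ℝ}
    (hγ0 : 0 ≤ γ) (hγ1 : γ < 1) {B : ℝ} (hB : ∀ s a s', |r s a s'| ≤ B) (s : S) :
    Summable (fun t : ℕ => γ ^ t * eStat π P r t s) := by
  refine Summable.of_abs ?_
  refine Summable.of_nonneg_of_le (fun t => abs_nonneg _) (fun t => ?_)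
    ((summable_geometric_of_lt_one hγ0 hγ1).mul_left B)
  rw [abs_mul, abs_pow, abs_of_nonneg hγ0]
  calc γ ^ t * |eStat π P r t s| ≤ γ ^ t * B :=
        mul_le_mul_of_nonneg_left (eStat_abs_le hπ hP hB t s) (pow_nonneg hγ0 t)
    _ = B * γ ^ t := by ring

lemma vHH_stat_fixed [Nonempty S] {π : S → A → ℝ} (hπ : IsPolicy π)
    {P : S → A → S → ℝ} (hP : IsKernel P) {r : S → A → S → ℝ} {γ : ℝ}
    (hγ0 : 0 ≤ γ) (hγ1 : γ < 1) {B : ℝ} (hB : ∀ s a s', |r s a s'| ≤ B) :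
    TpiP π r γ P (fun s => vHH (fun _ => π) (fun _ => P) r γ s)
      = fun s => vHH (fun _ => π) (fun _ => P) r γ s := by
  set w : S → ℝ := fun s => ∑' t : ℕ, γ ^ t * eStat π P r t s with hwdef
  have hvw : (fun s => vHH (fun _ => π) (fun _ => P) r γ s) = w := by
    funext s
    simp only [vHH, hwdef]
    exact tsum_congr fun t => by rw [expRHH_stat]
  rw [hvw]
  funext s
  have hsum : ∀ s' : S, Summable (fun t : ℕ => γ ^ t * eStat π P r t s') :=
    fun s' => summable_eStat hπ hP hγ0 hγ1 hB s'
  have hsum2 : ∀ (a : A) (s' : S),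
      Summable (fun t : ℕ => P s a s' * (γ * (γ ^ t * eStat π P r t s'))) := by
    intro a s'
    exact (((hsum s').mul_left γ).mul_left (P s a s'))
  have hsum3 : ∀ a : A, Summable (fun t : ℕ =>
      π s a * ∑ s', P s a s' * (γ * (γ ^ t * eStat π P r t s'))) := by
    intro a
    exact (summable_sum fun s' _ => hsum2 a s').mul_left (π s a)
  have hshift : ∀ t : ℕ, γ ^ (t + 1) * eStat π P r (t + 1) s
      = ∑ a, π s a * ∑ s', P s a s' * (γ * (γ ^ t * eStat π P r t s')) := by
    intro t
    show γ ^ (t + 1) * ∑ a, π s a * ∑ s', P s a s' * eStat π P r t s' = _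
    rw [pull_sum]
    refine Finset.sum_congr rfl fun a _ => ?_
    rw [pull_sum]
    congr 1
    exact Finset.sum_congr rfl fun s' _ => by ring
  have key : w s = (∑ a, π s a * ∑ s', P s a s' * r s a s')
      + ∑ a, π s a * ∑ s', P s a s' * (γ * w s') := by
    calc w s = γ ^ 0 * eStat π P r 0 s + ∑' t : ℕ, γ ^ (t + 1) * eStat π P r (t + 1) s :=
          Summable.tsum_eq_zero_add (hsum s)
      _ = (∑ a, π s a * ∑ s', P s a s' * r s a s')
          + ∑' t : ℕ, ∑ a, π s a * ∑ s', P s a s' * (γ * (γ ^ t * eStat π P r t s')) := by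
          rw [pow_zero, one_mul]
          congr 1
          exact tsum_congr hshift
      _ = (∑ a, π s a * ∑ s', P s a s' * r s a s')
          + ∑ a, π s a * ∑ s', P s a s' * (γ * w s') := by
          congr 1
          rw [Summable.tsum_finsetSum (fun a _ => hsum3 a)]
          refine Finset.sum_congr rfl fun a _ => ?_
          rw [tsum_mul_left]
          congr 1
          rw [Summable.tsum_finsetSum (fun s' _ => hsum2 a s')]
          refine Finset.sum_congr rfl fun s' _ => ?_
          rw [tsum_mul_left, tsum_mul_left]
  simp only [TpiP]
  rw [key]
  rw [← Finset.sum_add_distrib]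
  refine Finset.sum_congr rfl fun a _ => ?_
  rw [← mul_add, ← Finset.sum_add_distrib]
  congr 1
  refine Finset.sum_congr rfl fun s' _ => ?_
  ring

theorem stmt9 {S A : Type*} [Fintype S] [Fintype A] [Nonempty S] [Nonempty A]
    (US : Set (S → A → S → ℝ)) (hne : US.Nonempty) (hker : ∀ P ∈ US, IsKernel P)
    (hcpt : IsCompact US)
    (r : S → A → S → ℝ) (γ : ℝ) (hγ0 : 0 ≤ γ) (hγ1 : γ < 1)
    (μ : S → ℝ) (hμ : μ ∈ stdSimplex ℝ S)
    (v : (S → A → ℝ) → (S → A → S → ℝ) → S → ℝ)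
    (hv : ∀ π : S → A → ℝ, IsPolicy π → ∀ P ∈ US, TpiP π r γ P (v π P) = v π P)
    (hduality :
      maxOver {π : S → A → ℝ | IsPolicy π}
          (fun π => minOver US (fun P => ∑ s, μ s * v π P s)) =
        minOver US (fun P =>
          maxOver {π : S → A → ℝ | IsPolicy π} (fun π => ∑ s, μ s * v π P s))) :
    maxOver {π : List (S × A) → S → A → ℝ | IsHPolicy π}
        (fun π => minOver US (fun P => ∑ s, μ s * vHH π (fun _ => P) r γ s)) =
      maxOver {π : S → A → ℝ | IsPolicy π}
        (fun π => minOver US (fun P => ∑ s, μ s * v π P s)) := by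
  classical
  obtain ⟨B, hB'⟩ := Finite.exists_le (fun x : S × A × S => |r x.1 x.2.1 x.2.2|)
  have hB : ∀ s a s', |r s a s'| ≤ B := fun s a s' => hB' ⟨s, a, s'⟩
  have h1γ : 0 < 1 - γ := by linarith
  set C := B / (1 - γ) with hCdef
  -- bound on stationary values
  have hvbd : ∀ π : S → A → ℝ, IsPolicy π → ∀ P ∈ US, ∀ s, |v π P s| ≤ C :=
    fun π hπ P hP s => tpip_fixed_bound hπ hγ0 hγ1 (hker P hP) (hv π hπ P hP) hB s
  have hst_abs : ∀ π : S → A → ℝ, IsPolicy π → ∀ P ∈ US, |∑ s, μ s * v π P s| ≤ C :=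
    fun π hπ P hP => abs_wavg_le hμ fun s => hvbd π hπ P hP s
  have hhh_abs : ∀ π : List (S × A) → S → A → ℝ, IsHPolicy π → ∀ P ∈ US,
      |∑ s, μ s * vHH π (fun _ => P) r γ s| ≤ C :=
    fun π hπ P hP => abs_wavg_le hμ fun s => vHH_abs_le hπ (hker P hP) hγ0 hγ1 hB s
  -- (c) stationary = history value
  have hstat : ∀ π : S → A → ℝ, IsPolicy π → ∀ P ∈ US,
      (∑ s, μ s * vHH (fun _ => π) (fun _ => P) r γ s) = ∑ s, μ s * v π P s := by
    intro π hπ P hP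
    have h1 := vHH_stat_fixed hπ (hker P hP) hγ0 hγ1 hB
    have h2 : (fun s => vHH (fun _ => π) (fun _ => P) r γ s) = v π P :=
      tpip_fixed_unique hπ hγ0 hγ1 (hker P hP) h1 (hv π hπ P hP)
    exact Finset.sum_congr rfl fun s _ => by rw [congrFun h2 s]
  -- nonemptiness of policy sets
  obtain ⟨a₀⟩ := (inferInstance : Nonempty A)
  have hdetpol : IsPolicy (fun (_ : S) (a : A) => if a = a₀ then (1:ℝ) else 0) := by
    intro s
    constructor
    · intro a; dsimp only; split <;> norm_num
    · simp
  -- (e) every history value ≤ dual expression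
  have hDual : ∀ π : List (S × A) → S → A → ℝ, IsHPolicy π →
      minOver US (fun P => ∑ s, μ s * vHH π (fun _ => P) r γ s) ≤
        minOver US (fun P =>
          maxOver {π : S → A → ℝ | IsPolicy π} (fun π => ∑ s, μ s * v π P s)) := by
    intro π hπ
    refine le_csInf (hne.image _) ?_
    rintro b ⟨P, hPUS, rfl⟩
    have step : (∑ s, μ s * vHH π (fun _ => P) r γ s) ≤
        maxOver {π : S → A → ℝ | IsPolicy π} (fun π' => ∑ s, μ s * v π' P s) := by
      obtain ⟨u, hufix⟩ := exists_opt_fixed r hγ0 hγ1 P (hker P hPUS)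
      have hbell : ∀ s a, ∑ s', P s a s' * (r s a s' + γ * u s') ≤ u s := by
        intro s a
        calc ∑ s', P s a s' * (r s a s' + γ * u s')
            ≤ Finset.univ.sup' Finset.univ_nonempty
                (fun a => ∑ s', P s a s' * (r s a s' + γ * u s')) :=
              Finset.le_sup' (fun a => ∑ s', P s a s' * (r s a s' + γ * u s')) (Finset.mem_univ a)
          _ = u s := hufix s
      obtain ⟨πg, hπg, hgfix⟩ := exists_greedy hufix
      have hvg : v πg P = u :=
        tpip_fixed_unique hπg hγ0 hγ1 (hker P hPUS) (hv πg hπg P hPUS) hgfix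
      have hdom : ∀ s, vHH π (fun _ => P) r γ s ≤ u s :=
        fun s => vHH_le_of_bellman hπ (hker P hPUS) hγ0 hγ1 hB hbell s
      calc (∑ s, μ s * vHH π (fun _ => P) r γ s) ≤ ∑ s, μ s * v πg P s := by
            rw [hvg]; exact wavg_mono hμ hdom
        _ ≤ maxOver {π : S → A → ℝ | IsPolicy π} (fun π' => ∑ s, μ s * v π' P s) := by
            refine le_csSup ⟨C, ?_⟩ ⟨πg, hπg, rfl⟩
            rintro b ⟨π', hπ', rfl⟩
            exact (abs_le.mp (hst_abs π' hπ' P hPUS)).2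
    refine le_trans ?_ step
    refine csInf_le ⟨-C, ?_⟩ ⟨P, hPUS, rfl⟩
    rintro b ⟨P', hP', rfl⟩
    exact (abs_le.mp (hhh_abs π hπ P' hP')).1
  have hDual' : ∀ π : List (S × A) → S → A → ℝ, IsHPolicy π →
      minOver US (fun P => ∑ s, μ s * vHH π (fun _ => P) r γ s) ≤
        maxOver {π : S → A → ℝ | IsPolicy π}
          (fun π => minOver US (fun P => ∑ s, μ s * v π P s)) := by
    intro π hπ
    rw [hduality]
    exact hDual π hπ
  apply le_antisymm
  · refine csSup_le ?_ ?_
    · exact ⟨_, ⟨fun _ => fun (_ : S) (a : A) => if a = a₀ then (1:ℝ) else 0,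
        fun _ s => hdetpol s, rfl⟩⟩
    · rintro b ⟨π, hπ, rfl⟩
      exact hDual' π hπ
  · refine csSup_le ⟨_, ⟨_, hdetpol, rfl⟩⟩ ?_
    rintro b ⟨π, hπ, rfl⟩
    have heq : minOver US (fun P => ∑ s, μ s * vHH (fun _ => π) (fun _ => P) r γ s)
        = minOver US (fun P => ∑ s, μ s * v π P s) := by
      unfold minOver
      congr 1
      exact Set.image_congr fun P hPUS => hstat π hπ P hPUS
    refine le_csSup ?_ ⟨fun _ => π, fun _ _ => hπ _, heq⟩
    refine ⟨maxOver {π : S → A → ℝ | IsPolicy π}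
        (fun π => minOver US (fun P => ∑ s, μ s * v π P s)), ?_⟩
    rintro c ⟨π', hπ', rfl⟩
    exact hDual' π' hπ'

end RMDP
end
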